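/- arXiv:2311.03844 — 4 statements merged into one kernel-verified Lean document; each statement's English description precedes it below -/
import Mathlib

section
/- For a matrix A ∈ ℝ_max^{n×n} whose digraph 𝒢(A) contains at least one circuit, the maximum mean weight over all elementary circuits in 𝒢(A) is the maximum eigenvalue of A; that is, this maximum mean weight μ is an eigenvalue of A, and every eigenvalue of A is at most μ. -/
open BigOperators

/-- The max-plus semiring `ℝ_max = ℝ ∪ {ε}`, `ε = -∞`, realized as `WithBot ℝ`.
Here `⊔` (i.e. `max`) is the max-plus addition `⊕` and `+` is the
max-plus multiplication `⊗` (with `⊥ + x = ⊥`). -/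
abbrev Rmax : Type := WithBot ℝ

namespace MaxPlus

noncomputable section

/-- Max-plus matrix product `A ⊗ B`. -/
def mul {l m k : ℕ} (A : Matrix (Fin l) (Fin m) Rmax) (B : Matrix (Fin m) (Fin k) Rmax) :
    Matrix (Fin l) (Fin k) Rmax :=
  fun i j => Finset.univ.sup fun s => A i s + B s j

/-- Max-plus identity matrix `I_n` (`0` on the diagonal, `ε` off the diagonal). -/
def one (n : ℕ) : Matrix (Fin n) (Fin n) Rmax :=
  fun i j => if i = j then (0 : Rmax) else ⊥

/-- Max-plus matrix power `A^{⊗t}`. -/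
def pow {n : ℕ} (A : Matrix (Fin n) (Fin n) Rmax) : ℕ → Matrix (Fin n) (Fin n) Rmax
  | 0 => one n
  | t + 1 => mul (pow A t) A

variable {n : ℕ}

/-- `p` is a walk (path) of length `t` in the digraph `𝒢(A)`:
consecutive nodes are joined by arcs (finite entries of `A`). -/
def IsWalk (A : Matrix (Fin n) (Fin n) Rmax) (t : ℕ) (p : ℕ → Fin n) : Prop :=
  ∀ k, k < t → A (p k) (p (k + 1)) ≠ ⊥

/-- The weight of a walk: the sum of its arc weights. -/
def weight (A : Matrix (Fin n) (Fin n) Rmax) (t : ℕ) (p : ℕ → Fin n) : Rmax :=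
  ∑ k ∈ Finset.range t, A (p k) (p (k + 1))

/-- `p` is a circuit of length `t` in `𝒢(A)`. -/
def IsCircuit (A : Matrix (Fin n) (Fin n) Rmax) (t : ℕ) (p : ℕ → Fin n) : Prop :=
  0 < t ∧ IsWalk A t p ∧ p t = p 0

/-- Elementary circuit: no repeated node among `p 0, …, p (t-1)`. -/
def IsElemCircuit (A : Matrix (Fin n) (Fin n) Rmax) (t : ℕ) (p : ℕ → Fin n) : Prop :=
  IsCircuit A t p ∧ ∀ k, k < t → ∀ l, l < t → p k = p l → k = l

/-- Mean weight `w(𝒞)/ℓ(𝒞)` of a circuit, as a real number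
(the weight of a genuine circuit is never `⊥`). -/
def mean (A : Matrix (Fin n) (Fin n) Rmax) (t : ℕ) (p : ℕ → Fin n) : ℝ :=
  WithBot.unbotD 0 (weight A t p) / (t : ℝ)

/-- `x` is an eigenvector of `A` for the eigenvalue `lam`:
`x` is not identically `ε` and `A ⊗ x = lam ⊗ x`. -/
def IsEigenpair (A : Matrix (Fin n) (Fin n) Rmax) (lam : Rmax) (x : Fin n → Rmax) : Prop :=
  (∃ i, x i ≠ ⊥) ∧ ∀ i, (Finset.univ.sup fun k => A i k + x k) = lam + x i

/-- `lam` is an eigenvalue of `A`. -/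
def IsEigenvalue (A : Matrix (Fin n) (Fin n) Rmax) (lam : Rmax) : Prop :=
  ∃ x, IsEigenpair A lam x

/-- `μ = λ(A)`: the maximum mean weight over all circuits of `𝒢(A)`. -/
def IsMaxCircuitMean (A : Matrix (Fin n) (Fin n) Rmax) (μ : ℝ) : Prop :=
  (∃ t p, IsCircuit A t p ∧ mean A t p = μ) ∧ ∀ t p, IsCircuit A t p → mean A t p ≤ μ

/-- Kleene star `A* = I_n ⊕ A ⊕ A^{⊗2} ⊕ ⋯ ⊕ A^{⊗(n-1)}`. -/
def star (A : Matrix (Fin n) (Fin n) Rmax) : Matrix (Fin n) (Fin n) Rmax :=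
  fun i j => (Finset.range n).sup fun k => pow A k i j

/-- Partial sum `I_n ⊕ A ⊕ ⋯ ⊕ A^{⊗m}` of the Kleene star. -/
def starUpTo (A : Matrix (Fin n) (Fin n) Rmax) (m : ℕ) : Matrix (Fin n) (Fin n) Rmax :=
  fun i j => (Finset.range (m + 1)).sup fun k => pow A k i j

/-- Max-plus determinant `det A = ⊕_{π ∈ S_n} ⊗_i a_{iπ(i)}`. -/
def det (A : Matrix (Fin n) (Fin n) Rmax) : Rmax :=
  Finset.univ.sup fun π : Equiv.Perm (Fin n) => ∑ i, A i (π i)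

/-- Max-plus characteristic polynomial `χ_A(t) = det (A ⊕ t ⊗ I_n)`. -/
def charPoly (A : Matrix (Fin n) (Fin n) Rmax) (t : Rmax) : Rmax :=
  det fun i j => A i j ⊔ (if i = j then t else ⊥)

/-- Max-plus diagonal matrix `diag(d)` defined by a finite vector `d`. -/
def diagM (d : Fin n → ℝ) : Matrix (Fin n) (Fin n) Rmax :=
  fun i j => if i = j then ((d i : ℝ) : Rmax) else ⊥

/-- `A` is irreducible: `𝒢(A)` is strongly connected. -/
def Irreducible (A : Matrix (Fin n) (Fin n) Rmax) : Prop :=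
  ∀ i j : Fin n, ∃ t p, 0 < t ∧ IsWalk A t p ∧ p 0 = i ∧ p t = j

/-- `v` is a critical node of `A` (with `lamA = λ(A)`): it lies on a circuit
of mean weight `λ(A)`. -/
def IsCriticalNode (A : Matrix (Fin n) (Fin n) Rmax) (lamA : ℝ) (v : Fin n) : Prop :=
  ∃ t p, IsCircuit A t p ∧ mean A t p = lamA ∧ ∃ m, m < t ∧ p m = v

/-- `(i,j)` is a critical arc of `A` (with `lamA = λ(A)`). -/
def IsCriticalArc (A : Matrix (Fin n) (Fin n) Rmax) (lamA : ℝ) (i j : Fin n) : Prop :=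
  ∃ t p, IsCircuit A t p ∧ mean A t p = lamA ∧ ∃ m, m < t ∧ p m = i ∧ p (m + 1) = j

/-- A multi-circuit: a collection of pairwise node-disjoint elementary circuits,
each given by its length and its node sequence. -/
def IsMultiCircuit (A : Matrix (Fin n) (Fin n) Rmax) (L : List (ℕ × (ℕ → Fin n))) : Prop :=
  (∀ c ∈ L, IsElemCircuit A c.1 c.2) ∧
  L.Pairwise fun c d => ∀ k, k < c.1 → ∀ l, l < d.1 → c.2 k ≠ d.2 l

/-- Length of a multi-circuit: the sum of the lengths of its circuits. -/
def mcLength {n : ℕ} (L : List (ℕ × (ℕ → Fin n))) : ℕ := (L.map Prod.fst).sum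

/-- Weight of a multi-circuit: the sum of the weights of its circuits. -/
def mcWeight (A : Matrix (Fin n) (Fin n) Rmax) (L : List (ℕ × (ℕ → Fin n))) : Rmax :=
  (L.map fun c => weight A c.1 c.2).sum

/-- The value `w(𝔊) + λ·(n − ℓ(𝔊))` of a multi-circuit `𝔊`. -/
def mcVal (A : Matrix (Fin n) (Fin n) Rmax) (lam : ℝ)
    (L : List (ℕ × (ℕ → Fin n))) : Rmax :=
  mcWeight A L + ((((n : ℝ) - (mcLength L : ℝ)) * lam : ℝ) : Rmax)

/-- `L` is a `λ`-maximal multi-circuit (λ-MMC): `χ_A(λ) = w(L) + λ·(n − ℓ(L))`. -/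
def IsMMC (A : Matrix (Fin n) (Fin n) Rmax) (lam : ℝ) (L : List (ℕ × (ℕ → Fin n))) : Prop :=
  IsMultiCircuit A L ∧ charPoly A ((lam : ℝ) : Rmax) = mcVal A lam L

/-- `v` is the maximum weight of multi-circuits of length `k` in `𝒢(A)`
(`v = ⊥ = ε` if there is no multi-circuit of length `k`). -/
def IsMaxMCWeight (A : Matrix (Fin n) (Fin n) Rmax) (k : ℕ) (v : Rmax) : Prop :=
  (∀ L, IsMultiCircuit A L → mcLength L = k → mcWeight A L ≤ v) ∧
  (v = ⊥ ∨ ∃ L, IsMultiCircuit A L ∧ mcLength L = k ∧ mcWeight A L = v)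

/-- `rs` is a list of the `n` roots of `χ_A`, via the factorization of `χ_A`
into linear factors (the leading coefficient of `χ_A` is `0 = e`). -/
def IsCharRoots (A : Matrix (Fin n) (Fin n) Rmax) (rs : Fin n → Rmax) : Prop :=
  ∀ t, charPoly A t = ∑ i, (t ⊔ rs i)

/-- `lam 1 > lam 2 > ⋯ > lam p` are exactly the finite roots among `rs`,
in descending order. -/
def IsFiniteRootSeq {n : ℕ} (rs : Fin n → Rmax) (p : ℕ) (lam : ℕ → ℝ) : Prop :=
  (∀ k, 1 ≤ k → k < p → lam (k + 1) < lam k) ∧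
  (∀ k, 1 ≤ k → k ≤ p → ∃ i, rs i = ((lam k : ℝ) : Rmax)) ∧
  (∀ i, rs i = ⊥ ∨ ∃ k, 1 ≤ k ∧ k ≤ p ∧ rs i = ((lam k : ℝ) : Rmax))

/-- `G 0, G 1, …, G p` is a maximal multi-circuit sequence (MMCS) of `A`:
`G 0 = ∅` and `G k` is a `λ`-MMC for all `λ` with `λ_{k+1} ≤ λ ≤ λ_k`
(where `λ_0 = +∞` and `λ_{p+1} = ε`). -/
def IsMMCS (A : Matrix (Fin n) (Fin n) Rmax) (p : ℕ) (lam : ℕ → ℝ)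
    (G : ℕ → List (ℕ × (ℕ → Fin n))) : Prop :=
  G 0 = [] ∧
  ∀ k, k ≤ p → ∀ x : ℝ, (k < p → lam (k + 1) ≤ x) → (1 ≤ k → x ≤ lam k) → IsMMC A x (G k)

/-- The set of nodes of a circuit. -/
def circNodes (t : ℕ) (p : ℕ → Fin n) : Finset (Fin n) := (Finset.range t).image p

/-- A group produced by Algorithm 1: its node set `nodes`, its quasi-critical
circuit `(ct, cp)`, and the index `k = k(s)` with `(ct, cp) ∈ 𝔊_{k(s)}`. -/
structure Grp (n : ℕ) where
  nodes : Finset (Fin n)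
  ct : ℕ
  cp : ℕ → Fin n
  k : ℕ

/-- The union of the node sets of a list of groups. -/
def unionNodes (st : List (Grp n)) : Finset (Fin n) :=
  st.foldr (fun g acc => g.nodes ∪ acc) ∅

/-- One step of Algorithm 1, processing one circuit `c = (k, t, p)`;
the groups created so far are kept in reverse creation order. -/
def algStep (st : List (Grp n)) (c : ℕ × ℕ × (ℕ → Fin n)) : List (Grp n) :=
  let S := circNodes c.2.1 c.2.2
  if (S ∩ unionNodes st).Nonempty then
    match st with
    | [] => []
    | g :: rest => { g with nodes := g.nodes ∪ (S \ unionNodes st) } :: rest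
  else
    ⟨S, c.2.1, c.2.2, c.1⟩ :: st

/-- Algorithm 1: process the circuits of `G 1`, then `G 2`, …, then `G p` in
order, and finally add all never-covered nodes to the last created group.
The result is the list of groups `N_1, …, N_r` in creation order. -/
def algPartition (p : ℕ) (G : ℕ → List (ℕ × (ℕ → Fin n))) : List (Grp n) :=
  let items : List (ℕ × ℕ × (ℕ → Fin n)) :=
    (List.range p).foldr (fun k acc => ((G (k + 1)).map fun c => (k + 1, c.1, c.2)) ++ acc) []
  let st := items.foldl algStep []
  match st with
  | [] => []
  | g :: rest =>
      (({ g with nodes := g.nodes ∪ (Finset.univ \ unionNodes (g :: rest)) } : Grp n)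
        :: rest).reverse

/-- `U_s = N_1 ∪ ⋯ ∪ N_s` (`s` counted 1-based, i.e. the first `s` groups). -/
def Useq (Gs : List (Grp n)) (s : ℕ) : Finset (Fin n) := unionNodes (Gs.take s)

/-- The walk `P` (of length `t`) contains the circuit `(ct, cp)` as a
consecutive subpath. -/
def ContainsCircuit (t : ℕ) (P : ℕ → Fin n) (ct : ℕ) (cp : ℕ → Fin n) : Prop :=
  ∃ m, m + ct ≤ t ∧ ∀ j, j ≤ ct → P (m + j) = cp j

end

end MaxPlus

namespace MaxPlus
noncomputable section
open Finset
variable {n : ℕ}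

lemma add_sup2 (a x y : Rmax) : a + (x ⊔ y) = (a + x) ⊔ (a + y) :=
  (max_add_add_left a x y).symm

lemma add_finsetSup {ι : Type*} (a : Rmax) (s : Finset ι) (f : ι → Rmax) :
    a + s.sup f = s.sup fun i => a + f i := by
  classical
  induction s using Finset.induction with
  | empty => simp [WithBot.add_bot]
  | insert _ _ h ih => rw [Finset.sup_insert, Finset.sup_insert, add_sup2, ih]

lemma finsetSup_add {ι : Type*} (s : Finset ι) (f : ι → Rmax) (a : Rmax) :
    s.sup f + a = s.sup fun i => f i + a := by
  rw [add_comm, add_finsetSup]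
  exact Finset.sup_congr rfl fun i _ => add_comm _ _

lemma coe_sum {ι : Type*} (s : Finset ι) (f : ι → ℝ) :
    ((∑ i ∈ s, f i : ℝ) : Rmax) = ∑ i ∈ s, ((f i : ℝ) : Rmax) := by
  push_cast; ring

lemma ne_bot_coe {a : Rmax} (h : a ≠ ⊥) : a = ((WithBot.unbotD 0 a : ℝ) : Rmax) := by
  cases a
  · exact absurd rfl h
  · rfl

/-- real weight of a walk -/
def rweight (A : Matrix (Fin n) (Fin n) Rmax) (t : ℕ) (p : ℕ → Fin n) : ℝ :=
  ∑ k ∈ Finset.range t, WithBot.unbotD 0 (A (p k) (p (k + 1)))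

lemma weight_eq_rweight {A : Matrix (Fin n) (Fin n) Rmax} {t p} (h : IsWalk A t p) :
    weight A t p = ((rweight A t p : ℝ) : Rmax) := by
  rw [rweight, coe_sum, weight]
  exact Finset.sum_congr rfl fun k hk => ne_bot_coe (h k (Finset.mem_range.mp hk))

lemma mean_eq {A : Matrix (Fin n) (Fin n) Rmax} {t p} (h : IsWalk A t p) :
    mean A t p = rweight A t p / t := by
  rw [mean, weight_eq_rweight h, WithBot.unbotD_coe]

lemma walk_of_succ {A : Matrix (Fin n) (Fin n) Rmax} {t p} (h : IsWalk A (t + 1) p) :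
    IsWalk A t p := fun k hk => h k (hk.trans (Nat.lt_succ_self t))

lemma le_pow {A : Matrix (Fin n) (Fin n) Rmax} :
    ∀ t p, IsWalk A t p → weight A t p ≤ pow A t (p 0) (p t)
  | 0, p, _ => by simp [weight, pow, one]
  | t + 1, p, h => by
    have ih := le_pow t p (walk_of_succ h)
    calc weight A (t + 1) p = weight A t p + A (p t) (p (t + 1)) :=
          Finset.sum_range_succ _ _
      _ ≤ pow A t (p 0) (p t) + A (p t) (p (t + 1)) := add_le_add_left ih _
      _ ≤ pow A (t + 1) (p 0) (p (t + 1)) :=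
          Finset.le_sup (f := fun s => pow A t (p 0) s + A s (p (t + 1))) (Finset.mem_univ (p t))

lemma pow_walk {A : Matrix (Fin n) (Fin n) Rmax} :
    ∀ t (i j : Fin n), pow A t i j ≠ ⊥ →
      ∃ p, IsWalk A t p ∧ p 0 = i ∧ p t = j ∧ weight A t p = pow A t i j
  | 0, i, j, h => by
    have hij : i = j := by
      by_contra hc
      exact h (by simp [pow, one, hc])
    refine ⟨fun _ => i, fun k hk => absurd hk (Nat.not_lt_zero k), rfl, hij.symm ▸ rfl, ?_⟩
    simp [weight, pow, one, hij]
  | t + 1, i, j, h => by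
    obtain ⟨k, -, hk⟩ := Finset.exists_mem_eq_sup Finset.univ ⟨i, Finset.mem_univ i⟩
      (fun s => pow A t i s + A s j)
    have hsup : pow A (t + 1) i j = pow A t i k + A k j := hk
    rw [hsup] at h
    have h1 : pow A t i k ≠ ⊥ := fun hb => h (by rw [hb, WithBot.bot_add])
    have h2 : A k j ≠ ⊥ := fun hb => h (by rw [hb, WithBot.add_bot])
    obtain ⟨p', hw', h0', ht', hwt'⟩ := pow_walk t i k h1
    refine ⟨fun m => if m ≤ t then p' m else j, ?_, ?_, ?_, ?_⟩
    · intro m hm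
      rcases Nat.lt_or_ge m t with hmt | hmt
      · simpa [Nat.le_of_lt hmt, Nat.succ_le_of_lt hmt] using hw' m hmt
      · have hmt' : m = t := by omega
        subst hmt'
        simpa [Nat.lt_irrefl, ht'] using h2
    · simpa using h0'
    · simp
    · rw [weight, Finset.sum_range_succ]
      have hfst : ∑ m ∈ Finset.range t,
          A ((fun m => if m ≤ t then p' m else j) m) ((fun m => if m ≤ t then p' m else j) (m + 1))
          = weight A t p' := by
        refine Finset.sum_congr rfl fun m hm => ?_
        have hm' := Finset.mem_range.mp hm
        simp [Nat.le_of_lt hm', Nat.succ_le_of_lt hm']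
      rw [hfst, hwt', hsup]
      simp [ht']

lemma splice {A : Matrix (Fin n) (Fin n) Rmax} {t a d : ℕ} {p : ℕ → Fin n}
    (hd : 0 < d) (had : a + d ≤ t) (hw : IsWalk A t p) (hp : p (a + d) = p a) :
    IsWalk A (t - d) (fun m => if m ≤ a then p m else p (m + d)) ∧
    (fun m => if m ≤ a then p m else p (m + d)) 0 = p 0 ∧
    (fun m => if m ≤ a then p m else p (m + d)) (t - d) = p t ∧
    IsCircuit A d (fun m => p (a + m)) ∧
    weight A t p = weight A (t - d) (fun m => if m ≤ a then p m else p (m + d))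
      + weight A d (fun m => p (a + m)) := by
  set q : ℕ → Fin n := fun m => if m ≤ a then p m else p (m + d) with hq
  have hqlow : ∀ m, m ≤ a → q m = p m := fun m hm => if_pos hm
  have hqhigh : ∀ m, a ≤ m → q m = p (m + d) := by
    intro m hm
    rcases Nat.lt_or_ge a m with h | h
    · exact if_neg (by omega)
    · have : m = a := by omega
      subst this
      rw [hqlow m le_rfl, ← hp]
  set e := t - (a + d) with he
  have hte : t = a + d + e := by omega
  have htd : t - d = a + e := by omega
  have harcs : ∀ m, m < t - d →
      A (q m) (q (m + 1)) = A (p (if m < a then m else m + d)) (p ((if m < a then m else m + d) + 1)) := by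
    intro m hm
    rcases Nat.lt_or_ge m a with h | h
    · rw [if_pos h, hqlow m (by omega), hqlow (m+1) (by omega)]
    · rw [if_neg (by omega), hqhigh m h, hqhigh (m+1) (by omega),
        show m + 1 + d = m + d + 1 from by omega]
  constructor
  · intro m hm
    rw [harcs m hm]
    rcases Nat.lt_or_ge m a with h | h
    · rw [if_pos h]; exact hw m (by omega)
    · rw [if_neg (by omega)]; exact hw (m + d) (by omega)
  refine ⟨hqlow 0 (Nat.zero_le a), ?_, ?_, ?_⟩
  · rw [hqhigh (t - d) (by omega)]
    congr 1
    omega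
  · refine ⟨hd, fun k hk => ?_, ?_⟩
    · exact hw (a + k) (by omega)
    · show p (a + d) = p (a + 0)
      rw [hp, Nat.add_zero]
  · -- weight identity
    have h1 : weight A t p = (∑ k ∈ Finset.range a, A (p k) (p (k + 1)))
        + ((∑ k ∈ Finset.range d, A (p (a + k)) (p (a + k + 1)))
          + (∑ k ∈ Finset.range e, A (p (a + d + k)) (p (a + d + k + 1)))) := by
      rw [weight, hte, show a + d + e = a + (d + e) by omega, Finset.sum_range_add,
        Finset.sum_range_add]
      congr 1
      congr 1
      refine Finset.sum_congr rfl fun m _ => ?_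
      rw [show a + (d + m) = a + d + m from by omega]
    have h2 : weight A (t - d) q = (∑ k ∈ Finset.range a, A (p k) (p (k + 1)))
        + (∑ k ∈ Finset.range e, A (p (a + d + k)) (p (a + d + k + 1))) := by
      rw [weight, htd, Finset.sum_range_add]
      congr 1
      · refine Finset.sum_congr rfl fun m hm => ?_
        have hm' := Finset.mem_range.mp hm
        rw [hqlow m (by omega), hqlow (m + 1) (by omega)]
      · refine Finset.sum_congr rfl fun m hm => ?_
        rw [hqhigh (a + m) (by omega), hqhigh (a + m + 1) (by omega)]
        congr 2 <;> omega
    have h3 : weight A d (fun m => p (a + m)) =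
        ∑ k ∈ Finset.range d, A (p (a + k)) (p (a + k + 1)) := rfl
    rw [h1, h2, h3]
    abel

lemma circuit_rweight_le {A : Matrix (Fin n) (Fin n) Rmax} {μ : ℝ}
    (hub : ∀ t p, IsElemCircuit A t p → mean A t p ≤ μ) :
    ∀ t p, IsCircuit A t p → rweight A t p ≤ t * μ := by
  intro t
  induction t using Nat.strong_induction_on with
  | _ t ih =>
    intro p hc
    obtain ⟨ht, hw, hcl⟩ := hc
    by_cases helem : ∀ k, k < t → ∀ l, l < t → p k = p l → k = l
    · have hm := hub t p ⟨⟨ht, hw, hcl⟩, helem⟩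
      rw [mean_eq hw] at hm
      have htpos : (0 : ℝ) < t := by exact_mod_cast ht
      calc rweight A t p = (rweight A t p / t) * t := by field_simp
        _ ≤ μ * t := mul_le_mul_of_nonneg_right hm htpos.le
        _ = t * μ := mul_comm _ _
    · push_neg at helem
      obtain ⟨k, hk, l, hl, heq, hne⟩ := helem
      obtain ⟨a, b, hab, hbt, hpab⟩ : ∃ a b, a < b ∧ b < t ∧ p b = p a := by
        rcases lt_or_gt_of_ne hne with h | h
        exacts [⟨k, l, h, hl, heq.symm⟩, ⟨l, k, h, hk, heq⟩]
      have hd : 0 < b - a := by omega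
      have had : a + (b - a) ≤ t := by omega
      have hp' : p (a + (b - a)) = p a := by
        rw [show a + (b - a) = b from by omega]; exact hpab
      obtain ⟨hwq, hq0, hqt, hcc, hwt⟩ := splice hd had hw hp'
      have hqcirc : IsCircuit A (t - (b - a))
          (fun m => if m ≤ a then p m else p (m + (b - a))) :=
        ⟨by omega, hwq, by rw [hqt, hcl, ← hq0]⟩
      have h1 := ih (t - (b - a)) (by omega) _ hqcirc
      have h2 := ih (b - a) (by omega) _ hcc
      have hsum : rweight A t p = rweight A (t - (b - a))
            (fun m => if m ≤ a then p m else p (m + (b - a)))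
          + rweight A (b - a) (fun m => p (a + m)) := by
        have h := hwt
        rw [weight_eq_rweight hw, weight_eq_rweight hwq, weight_eq_rweight hcc.2.1,
          ← WithBot.coe_add] at h
        exact_mod_cast h
      have hcast : ((t - (b - a) : ℕ) : ℝ) = (t : ℝ) - ((b - a : ℕ) : ℝ) := by
        rw [Nat.cast_sub (by omega)]
      rw [hsum]
      calc rweight A (t - (b - a)) _ + rweight A (b - a) _
          ≤ ((t - (b - a) : ℕ) : ℝ) * μ + ((b - a : ℕ) : ℝ) * μ := add_le_add h1 h2
        _ = t * μ := by rw [hcast]; ring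

lemma walk_le_xsup {A : Matrix (Fin n) (Fin n) Rmax}
    (hcirc : ∀ t p, IsCircuit A t p → rweight A t p ≤ 0) (v : Fin n) :
    ∀ t p, 0 < t → IsWalk A t p → p t = v →
      weight A t p ≤ (Finset.Icc 1 n).sup fun s => pow A s (p 0) v := by
  intro t
  induction t using Nat.strong_induction_on with
  | _ t ih =>
    intro p ht hw hv
    by_cases htn : t ≤ n
    · calc weight A t p ≤ pow A t (p 0) (p t) := le_pow t p hw
        _ = pow A t (p 0) v := by rw [hv]
        _ ≤ _ := Finset.le_sup (f := fun s => pow A s (p 0) v) (Finset.mem_Icc.mpr ⟨ht, htn⟩)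
    · obtain ⟨k, hk, l, hl, hne, heq⟩ :=
        Finset.exists_ne_map_eq_of_card_lt_of_maps_to
          (s := Finset.range (n + 1)) (t := Finset.univ) (f := p)
          (by simp) (fun m _ => Finset.mem_univ (p m))
      obtain ⟨a, b, hab, hbn, hpab⟩ : ∃ a b, a < b ∧ b ≤ n ∧ p b = p a := by
        have hk' := Finset.mem_range.mp hk
        have hl' := Finset.mem_range.mp hl
        rcases lt_or_gt_of_ne hne with h | h
        exacts [⟨k, l, h, by omega, heq.symm⟩, ⟨l, k, h, by omega, heq⟩]
      have hd : 0 < b - a := by omega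
      have had : a + (b - a) ≤ t := by omega
      have hp' : p (a + (b - a)) = p a := by
        rw [show a + (b - a) = b from by omega]; exact hpab
      obtain ⟨hwq, hq0, hqt, hcc, hwt⟩ := splice hd had hw hp'
      have hcw : weight A (b - a) (fun m => p (a + m)) ≤ 0 := by
        rw [weight_eq_rweight hcc.2.1]
        exact_mod_cast hcirc _ _ hcc
      have hle : weight A t p ≤ weight A (t - (b - a))
          (fun m => if m ≤ a then p m else p (m + (b - a))) := by
        calc weight A t p = _ + _ := hwt
          _ ≤ _ + 0 := add_le_add_right hcw _
          _ = _ := add_zero _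
      refine hle.trans ?_
      have := ih (t - (b - a)) (by omega) _ (by omega) hwq (hqt.trans hv)
      rwa [if_pos (Nat.zero_le a)] at this

lemma weight_front (A : Matrix (Fin n) (Fin n) Rmax) (e : ℕ) (p : ℕ → Fin n) :
    weight A (e + 1) p = A (p 0) (p 1) + weight A e (fun m => p (m + 1)) := by
  rw [weight, Finset.sum_range_succ', add_comm]
  rfl

lemma eig_of_nonpos {A : Matrix (Fin n) (Fin n) Rmax}
    (hcirc : ∀ t p, IsCircuit A t p → rweight A t p ≤ 0)
    {v : Fin n} (hv : (0 : Rmax) ≤ (Finset.Icc 1 n).sup fun s => pow A s v v) :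
    ∃ x : Fin n → Rmax, (∃ i, x i ≠ ⊥) ∧
      ∀ i, (Finset.univ.sup fun k => A i k + x k) = x i := by
  set x : Fin n → Rmax := fun i => (Finset.Icc 1 n).sup fun s => pow A s i v with hxdef
  have hxv : (0 : Rmax) ≤ x v := hv
  refine ⟨x, ⟨v, fun hb => by rw [hb] at hxv; simp at hxv⟩, fun i => le_antisymm ?_ ?_⟩
  · -- sup_k (A i k + x k) ≤ x i
    refine Finset.sup_le fun k _ => ?_
    have hxk : A i k + x k = (Finset.Icc 1 n).sup fun s => A i k + pow A s k v :=
      add_finsetSup _ _ _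
    rw [hxk]
    refine Finset.sup_le fun s hs => ?_
    obtain ⟨hs1, hs2⟩ := Finset.mem_Icc.mp hs
    rcases eq_or_ne (A i k + pow A s k v) ⊥ with hb | hb
    · rw [hb]; exact bot_le
    have h1 : A i k ≠ ⊥ := fun h => hb (by rw [h, WithBot.bot_add])
    have h2 : pow A s k v ≠ ⊥ := fun h => hb (by rw [h, WithBot.add_bot])
    obtain ⟨p', hw', h0', ht', hwt'⟩ := pow_walk s k v h2
    set pw : ℕ → Fin n := fun m => if m = 0 then i else p' (m - 1) with hpw
    have hpw0 : pw 0 = i := rfl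
    have hpws : ∀ m, pw (m + 1) = p' m := fun m => rfl
    have hwalk : IsWalk A (s + 1) pw := by
      intro m hm
      rcases Nat.eq_zero_or_pos m with h | h
      · subst h
        rw [hpw0, hpws, h0']
        exact h1
      · obtain ⟨m', rfl⟩ : ∃ m', m = m' + 1 := ⟨m - 1, by omega⟩
        rw [hpws, hpws]
        exact hw' m' (by omega)
    have hweq : weight A (s + 1) pw = A i k + pow A s k v := by
      rw [weight_front, hpw0, hpws, h0', ← hwt']
      congr 1
    rw [← hweq]
    have := walk_le_xsup hcirc v (s + 1) pw (Nat.succ_pos s) hwalk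
      (by rw [hpws, ht'])
    rwa [hpw0] at this
  · -- x i ≤ sup_k (A i k + x k)
    refine Finset.sup_le fun s hs => ?_
    obtain ⟨hs1, hs2⟩ := Finset.mem_Icc.mp hs
    rcases eq_or_ne (pow A s i v) ⊥ with hb | hb
    · rw [hb]; exact bot_le
    obtain ⟨p', hw', h0', ht', hwt'⟩ := pow_walk s i v hb
    obtain ⟨e, rfl⟩ : ∃ e, s = e + 1 := ⟨s - 1, by omega⟩
    have hshift : weight A e (fun m => p' (m + 1)) ≤ x (p' 1) := by
      rcases Nat.eq_zero_or_pos e with h | h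
      · subst h
        have : p' 1 = v := ht'
        rw [this]
        simpa [weight] using hxv
      · have hwsh : IsWalk A e (fun m => p' (m + 1)) := fun m hm => hw' (m + 1) (by omega)
        calc weight A e (fun m => p' (m + 1)) ≤ pow A e (p' 1) (p' (e + 1)) :=
              le_pow e _ hwsh
          _ = pow A e (p' 1) v := by rw [ht']
          _ ≤ x (p' 1) := Finset.le_sup (f := fun s => pow A s (p' 1) v)
              (Finset.mem_Icc.mpr ⟨h, by omega⟩)
    calc pow A (e + 1) i v = weight A (e + 1) p' := hwt'.symm
      _ = A (p' 0) (p' 1) + weight A e (fun m => p' (m + 1)) := weight_front _ _ _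
      _ ≤ A (p' 0) (p' 1) + x (p' 1) := add_le_add_right hshift _
      _ = A i (p' 1) + x (p' 1) := by rw [h0']
      _ ≤ _ := Finset.le_sup (f := fun k => A i k + x k) (Finset.mem_univ (p' 1))

lemma coe_neg_cancel (a : Rmax) (c : ℝ) :
    a + ((-c : ℝ) : Rmax) + ((c : ℝ) : Rmax) = a := by
  induction a using WithBot.recBotCoe with
  | bot => rw [WithBot.bot_add, WithBot.bot_add]
  | coe r =>
    rw [← WithBot.coe_add, ← WithBot.coe_add]
    norm_num

end
end MaxPlus


open MaxPlus in
/-- For a matrix `A ∈ ℝ_max^{n×n}` whose digraph `𝒢(A)` contains at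
least one circuit, the maximum mean weight `μ` over all elementary circuits of `𝒢(A)`
is an eigenvalue of `A`, and every eigenvalue of `A` is at most `μ`. -/
theorem maxElemCircuitMean_is_max_eigenvalue {n : ℕ} (A : Matrix (Fin n) (Fin n) Rmax)
    (μ : ℝ)
    (hcirc : ∃ t p, IsCircuit A t p)
    (hach : ∃ t p, IsElemCircuit A t p ∧ mean A t p = μ)
    (hub : ∀ t p, IsElemCircuit A t p → mean A t p ≤ μ) :
    IsEigenvalue A ((μ : ℝ) : Rmax) ∧
      ∀ lam : Rmax, IsEigenvalue A lam → lam ≤ ((μ : ℝ) : Rmax) := by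
  classical
  obtain ⟨t0, p0, helem, hmean⟩ := hach
  have ht0pos : 0 < t0 := helem.1.1
  have hw0 : IsWalk A t0 p0 := helem.1.2.1
  have ht0n : t0 ≤ n := by
    have h := Finset.card_le_card_of_injOn p0 (fun m _ => Finset.mem_univ (p0 m))
      (fun k hk l hl h => helem.2 k (Finset.mem_range.mp hk) l (Finset.mem_range.mp hl) h)
    simpa using h
  have ht0R : (0 : ℝ) < t0 := by exact_mod_cast ht0pos
  rw [mean_eq hw0, div_eq_iff ht0R.ne'] at hmean
  have hrw0 : rweight A t0 p0 = t0 * μ := by rw [hmean]; ring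
  set B : Matrix (Fin n) (Fin n) Rmax := fun i j => A i j + ((-μ : ℝ) : Rmax) with hB
  have hBdef : ∀ i j, B i j = A i j + ((-μ : ℝ) : Rmax) := fun i j => rfl
  have harc : ∀ i j, B i j = ⊥ ↔ A i j = ⊥ := by
    intro i j
    rw [hBdef, WithBot.add_eq_bot]
    simp
  have hwalkBA : ∀ t p, IsWalk B t p ↔ IsWalk A t p :=
    fun t p => ⟨fun h k hk hb => h k hk ((harc _ _).mpr hb),
      fun h k hk hb => h k hk ((harc _ _).mp hb)⟩
  have hrwB : ∀ t p, IsWalk A t p → rweight B t p = rweight A t p - t * μ := by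
    intro t
    induction t with
    | zero => intro p _; simp [rweight]
    | succ t ih =>
      intro p h
      have hw' : IsWalk A t p := walk_of_succ h
      have ha := h t (Nat.lt_succ_self t)
      obtain ⟨a, ha'⟩ := WithBot.ne_bot_iff_exists.mp ha
      have hBt : B (p t) (p (t + 1)) = ((a + -μ : ℝ) : Rmax) := by
        rw [hBdef, ← ha', ← WithBot.coe_add]
      have hstepA : rweight A (t + 1) p
          = rweight A t p + WithBot.unbotD 0 (A (p t) (p (t + 1))) := Finset.sum_range_succ _ _
      have hstepB : rweight B (t + 1) p
          = rweight B t p + WithBot.unbotD 0 (B (p t) (p (t + 1))) := Finset.sum_range_succ _ _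
      have h2 : WithBot.unbotD 0 (B (p t) (p (t + 1))) = a + -μ := by
        rw [hBt, WithBot.unbotD_coe]
      have h3 : WithBot.unbotD 0 (A (p t) (p (t + 1))) = a := by
        rw [← ha', WithBot.unbotD_coe]
      rw [hstepA, hstepB, ih p hw', h2, h3]
      push_cast
      ring
  have hBcirc : ∀ t p, IsCircuit B t p → rweight B t p ≤ 0 := by
    intro t p hc
    have hcA : IsCircuit A t p := ⟨hc.1, (hwalkBA t p).mp hc.2.1, hc.2.2⟩
    have h1 := circuit_rweight_le hub t p hcA
    have h2 := hrwB t p hcA.2.1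
    rw [h2]; linarith
  have hw0B : IsWalk B t0 p0 := (hwalkBA _ _).mpr hw0
  have hrwB0 : rweight B t0 p0 = 0 := by rw [hrwB t0 p0 hw0, hrw0]; ring
  have hvge : (0 : Rmax) ≤ (Finset.Icc 1 n).sup fun s => pow B s (p0 0) (p0 0) := by
    have h1 : weight B t0 p0 = ((0 : ℝ) : Rmax) := by
      rw [weight_eq_rweight hw0B, hrwB0]
    have h2 := le_pow t0 p0 hw0B
    rw [h1, helem.1.2.2] at h2
    calc (0 : Rmax) = ((0 : ℝ) : Rmax) := rfl
      _ ≤ pow B t0 (p0 0) (p0 0) := h2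
      _ ≤ _ := Finset.le_sup (f := fun s => pow B s (p0 0) (p0 0))
          (Finset.mem_Icc.mpr ⟨ht0pos, ht0n⟩)
  obtain ⟨x, hx0, heq⟩ := eig_of_nonpos hBcirc hvge
  constructor
  · refine ⟨x, hx0, fun i => ?_⟩
    have h1 : ∀ k, A i k + x k = (B i k + x k) + ((μ : ℝ) : Rmax) := by
      intro k
      have hb : (B i k + x k) + ((μ : ℝ) : Rmax)
          = (B i k + ((μ : ℝ) : Rmax)) + x k := by abel
      rw [hb, hBdef, coe_neg_cancel]
    calc Finset.univ.sup (fun k => A i k + x k)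
        = Finset.univ.sup (fun k => (B i k + x k) + ((μ : ℝ) : Rmax)) :=
          Finset.sup_congr rfl fun k _ => h1 k
      _ = (Finset.univ.sup fun k => B i k + x k) + ((μ : ℝ) : Rmax) :=
          (finsetSup_add _ _ _).symm
      _ = x i + ((μ : ℝ) : Rmax) := by rw [heq i]
      _ = ((μ : ℝ) : Rmax) + x i := add_comm _ _
  · rintro lam ⟨y, ⟨i0, hi0⟩, heigy⟩
    rcases lam with _ | l
    · exact bot_le
    have hstep : ∀ i : Fin n, y i ≠ ⊥ →
        ∃ k, A i k ≠ ⊥ ∧ y k ≠ ⊥ ∧ A i k + y k = ((l : ℝ) : Rmax) + y i := by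
      intro i hi
      obtain ⟨k, -, hk⟩ := Finset.exists_mem_eq_sup Finset.univ ⟨i, Finset.mem_univ i⟩
        (fun k => A i k + y k)
      have h1 : A i k + y k = ((l : ℝ) : Rmax) + y i := hk.symm.trans (heigy i)
      have hnb : ((l : ℝ) : Rmax) + y i ≠ ⊥ := by
        obtain ⟨b, hb⟩ := WithBot.ne_bot_iff_exists.mp hi
        rw [← hb, ← WithBot.coe_add]
        exact WithBot.coe_ne_bot
      rw [← h1] at hnb
      exact ⟨k, fun h => hnb (by rw [h, WithBot.bot_add]),
        fun h => hnb (by rw [h, WithBot.add_bot]), h1⟩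
    choose g hg1 hg2 hg3 using hstep
    set F : ℕ → {i : Fin n // y i ≠ ⊥} := fun m =>
      Nat.rec ⟨i0, hi0⟩ (fun _ prev => ⟨g prev.1 prev.2, hg2 prev.1 prev.2⟩) m with hF
    set f : ℕ → Fin n := fun m => (F m).1 with hf
    have harcf : ∀ m, A (f m) (f (m + 1)) ≠ ⊥ := fun m => hg1 (F m).1 (F m).2
    have heqf : ∀ m, A (f m) (f (m + 1)) + y (f (m + 1)) = ((l : ℝ) : Rmax) + y (f m) :=
      fun m => hg3 (F m).1 (F m).2
    obtain ⟨k, hk, l', hl', hne, heq'⟩ :=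
      Finset.exists_ne_map_eq_of_card_lt_of_maps_to
        (s := Finset.range (n + 1)) (t := Finset.univ) (f := f)
        (by simp) (fun m _ => Finset.mem_univ (f m))
    obtain ⟨a, b, hab, hbn, hfab⟩ : ∃ a b, a < b ∧ b ≤ n ∧ f b = f a := by
      have hk' := Finset.mem_range.mp hk
      have hl'' := Finset.mem_range.mp hl'
      rcases lt_or_gt_of_ne hne with h | h
      exacts [⟨k, l', h, by omega, heq'.symm⟩, ⟨l', k, h, by omega, heq'⟩]
    have hc : IsCircuit A (b - a) (fun m => f (a + m)) := by
      refine ⟨by omega, fun k' hk' => harcf (a + k'), ?_⟩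
      show f (a + (b - a)) = f (a + 0)
      rw [show a + (b - a) = b from by omega, Nat.add_zero, hfab]
    have hterm : ∀ m, WithBot.unbotD 0 (A (f m) (f (m + 1)))
        = l + (WithBot.unbotD 0 (y (f m)) - WithBot.unbotD 0 (y (f (m + 1)))) := by
      intro m
      have h := heqf m
      rw [ne_bot_coe (harcf m), ne_bot_coe (F (m + 1)).2, ne_bot_coe (F m).2,
        ← WithBot.coe_add, ← WithBot.coe_add] at h
      have h' := WithBot.coe_inj.mp h
      linarith
    have hterm' : ∀ m, WithBot.unbotD 0 (A (f (a + m)) (f (a + (m + 1))))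
        = l + (WithBot.unbotD 0 (y (f (a + m))) - WithBot.unbotD 0 (y (f (a + (m + 1))))) :=
      fun m => hterm (a + m)
    have hrwc : rweight A (b - a) (fun m => f (a + m)) = (b - a : ℕ) * l := by
      rw [rweight]
      rw [Finset.sum_congr rfl (fun m _ => hterm' m)]
      rw [Finset.sum_add_distrib, Finset.sum_const, Finset.card_range,
        Finset.sum_range_sub' (fun j => WithBot.unbotD 0 (y (f (a + j))))]
      rw [show a + (b - a) = b from by omega, Nat.add_zero, hfab]
      simp [nsmul_eq_mul]
    have hle := circuit_rweight_le hub (b - a) _ hc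
    rw [hrwc] at hle
    have hd0 : (0 : ℝ) < ((b - a : ℕ) : ℝ) := by
      have : 0 < b - a := by omega
      exact_mod_cast this
    have hlμ : l ≤ μ := by nlinarith
    exact WithBot.coe_le_coe.mpr hlμ
end

section
/- Let A ∈ ℝ_max^{n×n} be a matrix whose digraph 𝒢(A) contains a circuit, let λ(A) be its maximum eigenvalue (equal to the maximum circuit mean weight), and let B = (−λ(A))⊗A. Then the k-th column of the Kleene star B* is an eigenvector of A with respect to λ(A) if and only if k is a critical node of A. -/
open BigOperators

namespace MaxPlus
noncomputable section
variable {n : ℕ}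

/-! ### Auxiliary lemmas -/

lemma sum_ne_bot_of_forall {s : Finset ℕ} {f : ℕ → Rmax} (h : ∀ a ∈ s, f a ≠ ⊥) :
    ∑ a ∈ s, f a ≠ ⊥ := by
  classical
  induction s using Finset.induction_on with
  | empty => simp
  | @insert a s hx ih =>
    rw [Finset.sum_insert hx]
    rw [Ne, WithBot.add_eq_bot]
    push_neg
    exact ⟨h a (Finset.mem_insert_self a s), ih fun b hb => h b (Finset.mem_insert_of_mem hb)⟩

lemma term_ne_bot_of_sum {s : Finset ℕ} {f : ℕ → Rmax} (h : ∑ a ∈ s, f a ≠ ⊥) :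
    ∀ a ∈ s, f a ≠ ⊥ := by
  classical
  intro a ha hfa
  apply h
  rw [← Finset.add_sum_erase s f ha, hfa]
  exact WithBot.bot_add _

lemma weight_succ (A : Matrix (Fin n) (Fin n) Rmax) (t : ℕ) (p : ℕ → Fin n) :
    weight A (t + 1) p = weight A t p + A (p t) (p (t + 1)) :=
  Finset.sum_range_succ _ t

lemma weight_succ' (A : Matrix (Fin n) (Fin n) Rmax) (t : ℕ) (p : ℕ → Fin n) :
    weight A (t + 1) p = A (p 0) (p 1) + weight A t (fun l => p (l + 1)) := by
  unfold weight
  rw [Finset.sum_range_succ' (fun k => A (p k) (p (k+1))) t, add_comm]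

lemma weight_split (A : Matrix (Fin n) (Fin n) Rmax) (t1 t2 : ℕ) (p : ℕ → Fin n) :
    weight A (t1 + t2) p = weight A t1 p + weight A t2 (fun l => p (t1 + l)) := by
  unfold weight
  rw [Finset.sum_range_add]
  rfl

lemma weight_congr {A : Matrix (Fin n) (Fin n) Rmax} {t : ℕ} {p q : ℕ → Fin n}
    (h : ∀ l, l ≤ t → p l = q l) : weight A t p = weight A t q := by
  refine Finset.sum_congr rfl fun l hl => ?_
  rw [Finset.mem_range] at hl
  rw [h l (le_of_lt hl), h (l+1) hl]

/-- L1: any walk weight is at most the corresponding power entry. -/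
lemma weight_le_pow (B : Matrix (Fin n) (Fin n) Rmax) :
    ∀ (t : ℕ) (p : ℕ → Fin n), weight B t p ≤ pow B t (p 0) (p t) := by
  intro t
  induction t with
  | zero => intro p; simp [weight, pow, one]
  | succ t ih =>
    intro p
    rw [weight_succ]
    calc weight B t p + B (p t) (p (t+1))
        ≤ pow B t (p 0) (p t) + B (p t) (p (t+1)) := add_le_add_left (ih p) _
      _ ≤ pow B (t+1) (p 0) (p (t+1)) := by
          have h := Finset.le_sup (f := fun s : Fin n => pow B t (p 0) s + B s (p (t+1)))
            (Finset.mem_univ (p t))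
          simpa [pow, mul] using h

/-- L2: each power entry is `⊥` or attained by a walk. -/
lemma pow_exists_walk (B : Matrix (Fin n) (Fin n) Rmax) :
    ∀ (t : ℕ) (i j : Fin n), pow B t i j = ⊥ ∨
      ∃ p : ℕ → Fin n, p 0 = i ∧ p t = j ∧ weight B t p = pow B t i j := by
  intro t
  induction t with
  | zero =>
    intro i j
    by_cases h : i = j
    · subst h
      exact Or.inr ⟨fun _ => i, rfl, rfl, by simp [weight, pow, one]⟩
    · exact Or.inl (by simp [pow, one, h])
  | succ t ih =>
    intro i j
    have hne : (Finset.univ : Finset (Fin n)).Nonempty := ⟨i, Finset.mem_univ i⟩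
    obtain ⟨s, -, hs⟩ := Finset.exists_mem_eq_sup Finset.univ hne
      (fun s => pow B t i s + B s j)
    have hpow : pow B (t+1) i j = pow B t i s + B s j := hs
    by_cases hb : pow B t i s + B s j = ⊥
    · exact Or.inl (hpow.trans hb)
    · rw [WithBot.add_eq_bot] at hb
      push_neg at hb
      obtain ⟨p, hp0, hpt, hw⟩ := (ih i s).resolve_left hb.1
      refine Or.inr ⟨fun l => if l ≤ t then p l else j, by simpa using hp0, by simp, ?_⟩
      rw [weight_succ]
      have h1 : weight B t (fun l => if l ≤ t then p l else j) = weight B t p :=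
        weight_congr fun l hl => if_pos hl
      have h2 : (if t ≤ t then p t else j) = s := by rw [if_pos le_rfl, hpt]
      have h3 : (if t + 1 ≤ t then p (t+1) else j) = j := if_neg (by omega)
      rw [h1, hw, hpow]
      simp only [h2, h3]


/-- The matrix `B = (−λ)⊗A`. -/
def Bm (A : Matrix (Fin n) (Fin n) Rmax) (lamA : ℝ) : Matrix (Fin n) (Fin n) Rmax :=
  fun i j => (((-lamA : ℝ)) : Rmax) + A i j

lemma Bm_ne_bot {A : Matrix (Fin n) (Fin n) Rmax} {lamA : ℝ} {i j : Fin n} :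
    Bm A lamA i j ≠ ⊥ ↔ A i j ≠ ⊥ := by
  simp [Bm, WithBot.add_eq_bot]

lemma weightB_eq (A : Matrix (Fin n) (Fin n) Rmax) (lamA : ℝ) (t : ℕ) (p : ℕ → Fin n) :
    weight (Bm A lamA) t p = (((t : ℝ) * (-lamA) : ℝ) : Rmax) + weight A t p := by
  unfold weight Bm
  rw [Finset.sum_add_distrib, Finset.sum_const, Finset.card_range,
    ← WithBot.coe_nsmul, nsmul_eq_mul]

lemma weightA_of_walk {A : Matrix (Fin n) (Fin n) Rmax} {t : ℕ} {p : ℕ → Fin n}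
    (hw : IsWalk A t p) : ∃ w : ℝ, weight A t p = ((w : ℝ) : Rmax) := by
  have : weight A t p ≠ ⊥ := sum_ne_bot_of_forall fun a ha =>
    hw a (Finset.mem_range.mp ha)
  obtain ⟨w, hwv⟩ := WithBot.ne_bot_iff_exists.mp this
  exact ⟨w, hwv.symm⟩

lemma circuit_weightB_nonpos {A : Matrix (Fin n) (Fin n) Rmax} {lamA : ℝ}
    (hub : ∀ t p, IsCircuit A t p → mean A t p ≤ lamA)
    {t : ℕ} {p : ℕ → Fin n} (hc : IsCircuit A t p) :
    weight (Bm A lamA) t p ≤ 0 := by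
  obtain ⟨w, hw⟩ := weightA_of_walk hc.2.1
  have hmean := hub t p hc
  rw [mean, hw] at hmean
  simp only [WithBot.unbotD_coe] at hmean
  have ht : (0 : ℝ) < t := by exact_mod_cast hc.1
  have hwle : w ≤ t * lamA := by
    rw [div_le_iff₀ ht] at hmean; linarith
  rw [weightB_eq, hw, ← WithBot.coe_add]
  have : (t : ℝ) * (-lamA) + w ≤ 0 := by nlinarith
  exact_mod_cast this

lemma weightB_zero_of_mean {A : Matrix (Fin n) (Fin n) Rmax} {lamA : ℝ}
    {t : ℕ} {p : ℕ → Fin n} (hc : IsCircuit A t p) (hm : mean A t p = lamA) :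
    weight (Bm A lamA) t p = 0 := by
  obtain ⟨w, hw⟩ := weightA_of_walk hc.2.1
  rw [mean, hw] at hm
  simp only [WithBot.unbotD_coe] at hm
  have ht : (0 : ℝ) < t := by exact_mod_cast hc.1
  have hwe : w = t * lamA := by
    field_simp at hm; linarith
  rw [weightB_eq, hw, ← WithBot.coe_add]
  have : (t : ℝ) * (-lamA) + w = 0 := by rw [hwe]; ring
  exact_mod_cast this

lemma mean_eq_of_weightB_zero {A : Matrix (Fin n) (Fin n) Rmax} {lamA : ℝ}
    {t : ℕ} {p : ℕ → Fin n} (hc : IsCircuit A t p)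
    (hw0 : weight (Bm A lamA) t p = 0) : mean A t p = lamA := by
  obtain ⟨w, hw⟩ := weightA_of_walk hc.2.1
  rw [weightB_eq, hw, ← WithBot.coe_add] at hw0
  have ht : (0 : ℝ) < t := by exact_mod_cast hc.1
  have h : (t : ℝ) * (-lamA) + w = 0 := by exact_mod_cast hw0
  rw [mean, hw]
  simp only [WithBot.unbotD_coe]
  field_simp
  linarith

/-- The workhorse: any walk weight in `B` is bounded by the corresponding
entry of the Kleene star. -/
lemma walk_weight_le_star {A : Matrix (Fin n) (Fin n) Rmax} {lamA : ℝ}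
    (hub : ∀ t p, IsCircuit A t p → mean A t p ≤ lamA) :
    ∀ (t : ℕ) (p : ℕ → Fin n),
      weight (Bm A lamA) t p ≤ star (Bm A lamA) (p 0) (p t) := by
  intro t
  induction t using Nat.strong_induction_on with
  | _ t ih =>
    intro p
    by_cases htn : t < n
    · exact le_trans (weight_le_pow _ t p)
        (Finset.le_sup (f := fun m => pow (Bm A lamA) m (p 0) (p t))
          (Finset.mem_range.mpr htn))
    push_neg at htn
    by_cases hw : weight (Bm A lamA) t p = ⊥
    · rw [hw]; exact bot_le
    have hn : 0 < n := (p 0).pos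
    obtain ⟨c, d, hcd, hpcd⟩ :=
      Fintype.exists_ne_map_eq_of_card_lt (fun l : Fin (n + 1) => p l) (by simp)
    -- get a < b ≤ n with p a = p b
    obtain ⟨a, b, hab, hbn, hpab⟩ : ∃ a b : ℕ, a < b ∧ b ≤ n ∧ p a = p b := by
      rcases lt_or_gt_of_ne hcd with h | h
      · exact ⟨c, d, h, Nat.lt_succ_iff.mp d.isLt, hpcd⟩
      · exact ⟨d, c, h, Nat.lt_succ_iff.mp c.isLt, hpcd.symm⟩
    have hbt : b ≤ t := le_trans hbn htn
    set u := b - a with hu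
    set v := t - b with hv
    have hau : a + u = b := by omega
    have ht' : t = a + (u + v) := by omega
    -- the removed circuit
    have hcirc : IsCircuit A u (fun l => p (a + l)) := by
      refine ⟨by omega, fun l hl => ?_, by simp only [Nat.add_zero, hau, ← hpab]⟩
      rw [← Bm_ne_bot (lamA := lamA)]
      have := term_ne_bot_of_sum hw (a + l) (Finset.mem_range.mpr (by omega))
      simpa [Nat.add_assoc] using this
    -- split the weight
    have hsplit : weight (Bm A lamA) t p =
        weight (Bm A lamA) a p + (weight (Bm A lamA) u (fun l => p (a + l)) +
          weight (Bm A lamA) v (fun l => p (b + l))) := by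
      rw [ht', weight_split, weight_split]
      congr 1
      congr 1
      exact weight_congr fun l _ => by rw [show a + (u + l) = b + l by omega]
    -- the shortened walk
    set p' : ℕ → Fin n := fun l => if l < a then p l else p (l + u) with hp'
    have hp'0 : p' 0 = p 0 := by
      simp only [hp']
      rcases Nat.eq_zero_or_pos a with ha0 | ha0
      · rw [if_neg (show ¬ (0:ℕ) < a by omega), show 0 + u = b by omega, ← hpab, ha0]
      · rw [if_pos ha0]
    have hp't : p' (a + v) = p t := by
      simp only [hp']
      rw [if_neg (show ¬ a + v < a by omega), show a + v + u = t by omega]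
    have hw' : weight (Bm A lamA) (a + v) p' =
        weight (Bm A lamA) a p + weight (Bm A lamA) v (fun l => p (b + l)) := by
      rw [weight_split]
      congr 1
      · refine weight_congr fun l hl => ?_
        simp only [hp']
        by_cases hla : l < a
        · rw [if_pos hla]
        · have hla' : l = a := by omega
          subst hla'
          rw [if_neg (lt_irrefl l), show l + u = b from hau]
          exact hpab.symm
      · refine weight_congr fun l _ => ?_
        simp only [hp']
        rw [if_neg (show ¬ a + l < a by omega), show a + l + u = b + l by omega]
    have hle : weight (Bm A lamA) t p ≤ weight (Bm A lamA) (a + v) p' := by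
      rw [hsplit, hw']
      calc weight (Bm A lamA) a p + (weight (Bm A lamA) u (fun l => p (a + l)) +
              weight (Bm A lamA) v (fun l => p (b + l)))
          ≤ weight (Bm A lamA) a p + ((0:Rmax) +
              weight (Bm A lamA) v (fun l => p (b + l))) := by
            exact add_le_add_right (add_le_add_left
              (circuit_weightB_nonpos hub hcirc) _) _
        _ = _ := by rw [zero_add]
    refine le_trans hle (le_trans (ih (a + v) (by omega) p') ?_)
    rw [hp'0, hp't]

lemma pow_diag_nonpos {A : Matrix (Fin n) (Fin n) Rmax} {lamA : ℝ}
    (hub : ∀ t p, IsCircuit A t p → mean A t p ≤ lamA) (m : ℕ) (k : Fin n) :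
    pow (Bm A lamA) m k k ≤ 0 := by
  cases m with
  | zero => simp [pow, one]
  | succ m' =>
    rcases pow_exists_walk (Bm A lamA) (m' + 1) k k with hbot | ⟨p, hp0, hpt, hpw⟩
    · rw [hbot]; exact bot_le
    by_cases hwb : weight (Bm A lamA) (m' + 1) p = ⊥
    · rw [← hpw, hwb]; exact bot_le
    have hcirc : IsCircuit A (m' + 1) p := by
      refine ⟨Nat.succ_pos _, fun l hl => ?_, by rw [hpt, hp0]⟩
      rw [← Bm_ne_bot (lamA := lamA)]
      exact term_ne_bot_of_sum hwb l (Finset.mem_range.mpr hl)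
    rw [← hpw]
    exact circuit_weightB_nonpos hub hcirc

lemma star_diag {A : Matrix (Fin n) (Fin n) Rmax} {lamA : ℝ}
    (hub : ∀ t p, IsCircuit A t p → mean A t p ≤ lamA) (hn : 0 < n) (k : Fin n) :
    star (Bm A lamA) k k = 0 := by
  refine le_antisymm (Finset.sup_le fun m _ => pow_diag_nonpos hub m k) ?_
  have h0 : pow (Bm A lamA) 0 k k = 0 := by simp [pow, one]
  calc (0 : Rmax) = pow (Bm A lamA) 0 k k := h0.symm
    _ ≤ _ := Finset.le_sup (f := fun m => pow (Bm A lamA) m k k) (Finset.mem_range.mpr hn)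

/-- Rotating a closed walk preserves its weight. -/
lemma rotate_weight (B' : Matrix (Fin n) (Fin n) Rmax) {t mstar : ℕ} (hm : mstar < t)
    (q : ℕ → Fin n) (hq : q t = q 0) :
    ∃ r : ℕ → Fin n, r 0 = q mstar ∧ r t = q mstar ∧ weight B' t r = weight B' t q := by
  set d := t - mstar with hd
  set r : ℕ → Fin n := fun l => if l ≤ d then q (mstar + l) else q (l - d) with hr
  have e1 : weight B' d r = weight B' d (fun l => q (mstar + l)) :=
    weight_congr fun l hl => by simp only [hr]; exact if_pos hl
  have e2 : weight B' mstar (fun l => r (d + l)) = weight B' mstar q := by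
    refine Finset.sum_congr rfl fun l hl => ?_
    rw [Finset.mem_range] at hl
    have h1 : r (d + l) = q l := by
      simp only [hr]
      by_cases hl0 : l = 0
      · subst hl0
        rw [if_pos (show d + 0 ≤ d by omega), show mstar + (d + 0) = t by omega, hq]
      · rw [if_neg (show ¬ d + l ≤ d by omega), show d + l - d = l by omega]
    have h2 : r (d + (l + 1)) = q (l + 1) := by
      simp only [hr]
      rw [if_neg (show ¬ d + (l + 1) ≤ d by omega), show d + (l + 1) - d = l + 1 by omega]
    show B' (r (d + l)) (r (d + (l+1))) = _
    rw [h1, h2]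
  refine ⟨r, ?_, ?_, ?_⟩
  · simp only [hr]
    rw [if_pos (Nat.zero_le d), Nat.add_zero]
  · simp only [hr]
    rcases Nat.eq_zero_or_pos mstar with h0 | h0
    · subst h0
      rw [if_pos (show t ≤ d by omega), show (0:ℕ) + t = t by omega, hq]
    · rw [if_neg (show ¬ t ≤ d by omega), show t - d = mstar by omega]
  · have ht1 : t = d + mstar := by omega
    have ht2 : t = mstar + d := by omega
    calc weight B' t r
        = weight B' d r + weight B' mstar (fun l => r (d + l)) := by
          conv_lhs => rw [ht1, weight_split]
      _ = weight B' mstar q + weight B' d (fun l => q (mstar + l)) := by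
          rw [e1, e2, add_comm]
      _ = weight B' t q := by
          conv_rhs => rw [ht2, weight_split]

lemma coe_add_sup (c : ℝ) {m : ℕ} (s : Finset (Fin m)) (f : Fin m → Rmax) :
    ((c : Rmax) + s.sup f) = s.sup fun i => (c : Rmax) + f i := by
  have hm : Monotone (fun x : Rmax => (c : Rmax) + x) := fun a b h => add_le_add_right h _
  have := Finset.comp_sup_eq_sup_comp (s := s) (f := f) (fun x => (c : Rmax) + x)
    (fun a b => hm.map_max) (by simp)
  exact this

lemma A_eq_lam_add_Bm (A : Matrix (Fin n) (Fin n) Rmax) (lamA : ℝ) (i j : Fin n) :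
    A i j = ((lamA : ℝ) : Rmax) + Bm A lamA i j := by
  unfold Bm
  induction A i j using WithBot.recBotCoe with
  | bot => simp
  | coe a =>
    rw [← WithBot.coe_add, ← WithBot.coe_add]
    norm_num

end
end MaxPlus

open MaxPlus in
/-- Let `A` have a circuit, let `λ(A)` be its maximum eigenvalue
(= maximum circuit mean weight), and `B = (−λ(A)) ⊗ A`.  The `k`-th column of the
Kleene star `B*` is an eigenvector of `A` with respect to `λ(A)` iff `k` is a
critical node of `A`. -/
theorem kleeneStar_column_eigenvector_iff_critical {n : ℕ}
    (A : Matrix (Fin n) (Fin n) Rmax) (lamA : ℝ)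
    (hlam : IsMaxCircuitMean A lamA) (k : Fin n) :
    IsEigenpair A ((lamA : ℝ) : Rmax)
        (fun i => star (fun i j => (((-lamA : ℝ)) : Rmax) + A i j) i k) ↔
      IsCriticalNode A lamA k := by
  obtain ⟨-, hub⟩ := hlam
  have hn : 0 < n := k.pos
  have hBm : (fun i j => (((-lamA : ℝ)) : Rmax) + A i j) = Bm A lamA := rfl
  rw [hBm]
  set x : Fin n → Rmax := fun i => star (Bm A lamA) i k with hx
  have hxk : x k = 0 := star_diag hub hn k
  -- the key reduction of the eigen-equation
  have key : ∀ i : Fin n,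
      ((Finset.univ.sup fun s => A i s + x s) = ((lamA : ℝ) : Rmax) + x i) ↔
      ((Finset.univ.sup fun s => Bm A lamA i s + x s) = x i) := by
    intro i
    have h1 : (Finset.univ.sup fun s => A i s + x s) =
        ((lamA : ℝ) : Rmax) + Finset.univ.sup fun s => Bm A lamA i s + x s := by
      rw [coe_add_sup]
      exact Finset.sup_congr rfl fun s _ => by rw [A_eq_lam_add_Bm A lamA i s, add_assoc]
    rw [h1]
    constructor
    · intro h
      exact WithBot.add_left_cancel (by simp) h
    · intro h
      rw [h]
  constructor
  · -- eigenvector ⇒ critical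
    rintro ⟨-, heig⟩
    have h0 : (Finset.univ.sup fun s => Bm A lamA k s + x s) = 0 := by
      rw [(key k).1 (heig k), hxk]
    obtain ⟨s, -, hs⟩ := Finset.exists_mem_eq_sup (Finset.univ : Finset (Fin n))
      ⟨k, Finset.mem_univ k⟩ (fun s => Bm A lamA k s + x s)
    rw [hs] at h0
    have hxsne : x s ≠ ⊥ := fun hb => by simp [hb] at h0
    obtain ⟨m, hmr, hms⟩ := Finset.exists_mem_eq_sup (Finset.range n)
      ⟨0, Finset.mem_range.mpr hn⟩ (fun m => pow (Bm A lamA) m s k)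
    have hxs : x s = pow (Bm A lamA) m s k := hms
    have hpne : pow (Bm A lamA) m s k ≠ ⊥ := hxs ▸ hxsne
    obtain ⟨p, hp0, hpm, hpw⟩ := (pow_exists_walk (Bm A lamA) m s k).resolve_left hpne
    set q : ℕ → Fin n := fun l => if l = 0 then k else p (l - 1) with hq
    have hq0 : q 0 = k := rfl
    have hqe : ∀ l, l ≤ m → q (l + 1) = p l := fun l _ => by simp [hq]
    have hwq : weight (Bm A lamA) (m + 1) q = 0 := by
      rw [weight_succ', weight_congr (A := Bm A lamA) hqe, hpw, ← hxs, hq0,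
        show q 1 = p 0 from hqe 0 (Nat.zero_le m), hp0, h0]
    have hcirc : IsCircuit A (m + 1) q := by
      refine ⟨Nat.succ_pos _, fun l hl => ?_, by rw [hqe m le_rfl, hpm, hq0]⟩
      rw [← Bm_ne_bot (lamA := lamA)]
      exact term_ne_bot_of_sum (hwq ▸ (by simp : (0:Rmax) ≠ ⊥)) l (Finset.mem_range.mpr hl)
    exact ⟨m + 1, q, hcirc, mean_eq_of_weightB_zero hcirc hwq, 0, Nat.succ_pos _, hq0⟩
  · -- critical ⇒ eigenvector
    intro hcrit
    refine ⟨⟨k, by rw [hxk]; simp⟩, fun i => (key i).2 (le_antisymm ?_ ?_)⟩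
    · -- (B ⊗ x) i ≤ x i
      refine Finset.sup_le fun s _ => ?_
      by_cases hxs : x s = ⊥
      · rw [hxs, WithBot.add_bot]
        exact bot_le
      obtain ⟨m, hmr, hms⟩ := Finset.exists_mem_eq_sup (Finset.range n)
        ⟨0, Finset.mem_range.mpr hn⟩ (fun m => pow (Bm A lamA) m s k)
      have hxsv : x s = pow (Bm A lamA) m s k := hms
      have hpne : pow (Bm A lamA) m s k ≠ ⊥ := hxsv ▸ hxs
      obtain ⟨p, hp0, hpm, hpw⟩ := (pow_exists_walk (Bm A lamA) m s k).resolve_left hpne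
      set q : ℕ → Fin n := fun l => if l = 0 then i else p (l - 1) with hq
      have hqe : ∀ l, l ≤ m → q (l + 1) = p l := fun l _ => by simp [hq]
      have hwq : weight (Bm A lamA) (m + 1) q = Bm A lamA i s + x s := by
        rw [weight_succ', weight_congr (A := Bm A lamA) hqe, hpw, ← hxsv,
          show q 0 = i from rfl, show q 1 = p 0 from hqe 0 (Nat.zero_le m), hp0]
      calc Bm A lamA i s + x s = weight (Bm A lamA) (m + 1) q := hwq.symm
        _ ≤ star (Bm A lamA) (q 0) (q (m + 1)) := walk_weight_le_star hub (m + 1) q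
        _ = x i := by rw [show q 0 = i from rfl, hqe m le_rfl, hpm]
    · -- x i ≤ (B ⊗ x) i
      refine Finset.sup_le fun m hmr => ?_
      rw [Finset.mem_range] at hmr
      rcases pow_exists_walk (Bm A lamA) m i k with hbot | ⟨p, hp0, hpm, hpw⟩
      · rw [hbot]; exact bot_le
      cases m with
      | succ m' =>
        have h1 : weight (Bm A lamA) m' (fun l => p (l + 1)) ≤ pow (Bm A lamA) m' (p 1) k := by
          have := weight_le_pow (Bm A lamA) m' (fun l => p (l + 1))
          simpa [hpm] using this
        have h2 : pow (Bm A lamA) m' (p 1) k ≤ x (p 1) :=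
          Finset.le_sup (f := fun m => pow (Bm A lamA) m (p 1) k)
            (Finset.mem_range.mpr (by omega))
        calc pow (Bm A lamA) (m' + 1) i k = weight (Bm A lamA) (m' + 1) p := hpw.symm
          _ = Bm A lamA (p 0) (p 1) + weight (Bm A lamA) m' (fun l => p (l + 1)) :=
              weight_succ' _ m' p
          _ ≤ Bm A lamA i (p 1) + x (p 1) := by
              rw [hp0]; exact add_le_add_right (le_trans h1 h2) _
          _ ≤ _ := Finset.le_sup (f := fun s => Bm A lamA i s + x s) (Finset.mem_univ (p 1))
      | zero =>
        by_cases hik : i = k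
        · subst hik
          have hp00 : pow (Bm A lamA) 0 i i = 0 := by simp [pow, one]
          rw [hp00]
          -- use criticality
          obtain ⟨t, qc, hc, hmean, mstar, hmt, hmk⟩ := hcrit
          obtain ⟨r, hr0, hrt, hrw⟩ := rotate_weight (Bm A lamA) hmt qc hc.2.2
          rw [hmk] at hr0 hrt
          have hw0 : weight (Bm A lamA) t r = 0 := by
            rw [hrw]; exact weightB_zero_of_mean hc hmean
          obtain ⟨t', rfl⟩ : ∃ t', t = t' + 1 := ⟨t - 1, by omega⟩
          rw [weight_succ'] at hw0
          have htail : weight (Bm A lamA) t' (fun l => r (l + 1)) ≤ x (r 1) := by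
            have := walk_weight_le_star hub t' (fun l => r (l + 1))
            simpa [show r (t' + 1) = i from hrt] using this
          calc (0 : Rmax) = Bm A lamA (r 0) (r 1) +
                weight (Bm A lamA) t' (fun l => r (l + 1)) := hw0.symm
            _ ≤ Bm A lamA i (r 1) + x (r 1) := by
                rw [hr0]; exact add_le_add_right htail _
            _ ≤ _ := Finset.le_sup (f := fun s => Bm A lamA i s + x s)
                (Finset.mem_univ (r 1))
        · have : pow (Bm A lamA) 0 i k = ⊥ := by simp [pow, one, hik]
          rw [this]
          exact bot_le
end

section
/- For a matrix A ∈ ℝ_max^{n×n} whose digraph 𝒢(A) contains a circuit, the maximum root of the characteristic polynomial χ_A(t) = det(A ⊕ t⊗I_n) equals the maximum eigenvalue of A, which also equals the maximum mean weight of circuits in 𝒢(A). -/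
open BigOperators

namespace MaxPlusAux
open MaxPlus

variable {n : ℕ}

lemma coe_sum {α : Type*} (s : Finset α) (f : α → ℝ) :
    ((∑ i ∈ s, f i : ℝ) : Rmax) = ∑ i ∈ s, ((f i : ℝ) : Rmax) := by
  push_cast; rfl

lemma sum_eq_bot_of_mem {α : Type*} (s : Finset α) (f : α → Rmax)
    (h : ∃ i ∈ s, f i = ⊥) : ∑ i ∈ s, f i = ⊥ := by
  induction s using Finset.cons_induction with
  | empty => simp at h
  | cons a s ha ih =>
    rw [Finset.sum_cons]
    rcases h with ⟨i, hi, hbot⟩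
    rcases Finset.mem_cons.mp hi with rfl | hi
    · rw [hbot, WithBot.bot_add]
    · rw [ih ⟨i, hi, hbot⟩, WithBot.add_bot]

lemma exists_coe_of_ne_bot {b : Rmax} (hb : b ≠ ⊥) : ∃ r : ℝ, b = (r : ℝ) := by
  cases b with
  | none => exact absurd rfl hb
  | some r => exact ⟨r, rfl⟩

lemma add_ne_bot {a b : Rmax} (h : a + b ≠ ⊥) : a ≠ ⊥ ∧ b ≠ ⊥ := by
  constructor <;> intro h' <;> simp [h'] at h

lemma sup_attain (f : Fin n → Rmax) (hn : 0 < n) : ∃ k, Finset.univ.sup f = f k := by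
  obtain ⟨b, _, hb⟩ := Finset.exists_mem_eq_sup Finset.univ
    (Finset.univ_nonempty_iff.mpr ⟨⟨0, hn⟩⟩) f
  exact ⟨b, hb⟩

/-- weight of a walk picks a real value if all arcs are non-⊥. -/
lemma weight_coe_of_walk {A : Matrix (Fin n) (Fin n) Rmax} {t : ℕ} {p : ℕ → Fin n}
    (h : IsWalk A t p) : ∃ w : ℝ, weight A t p = (w : ℝ) := by
  induction t with
  | zero => exact ⟨0, by simp [weight]⟩
  | succ t ih =>
    obtain ⟨w, hw⟩ := ih (fun k hk => h k (Nat.lt_succ_of_lt hk))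
    obtain ⟨a, ha⟩ := exists_coe_of_ne_bot (h t (Nat.lt_succ_self t))
    exact ⟨w + a, by rw [weight, Finset.sum_range_succ, ← weight, hw, ha, ← WithBot.coe_add]⟩

lemma walk_of_weight_ne_bot {A : Matrix (Fin n) (Fin n) Rmax} {t : ℕ} {p : ℕ → Fin n}
    (h : weight A t p ≠ ⊥) : IsWalk A t p := by
  intro k hk hbot
  exact h (sum_eq_bot_of_mem _ _ ⟨k, Finset.mem_range.mpr hk, hbot⟩)

/-- Circuit weight bound from maximality of the circuit mean. -/
lemma circuit_weight_le {A : Matrix (Fin n) (Fin n) Rmax} {lamA : ℝ}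
    (hlam : IsMaxCircuitMean A lamA) {t : ℕ} {p : ℕ → Fin n}
    (h : IsCircuit A t p) : weight A t p ≤ (((t : ℝ) * lamA : ℝ) : Rmax) := by
  obtain ⟨w, hw⟩ := weight_coe_of_walk h.2.1
  have hm := hlam.2 t p h
  rw [mean, hw] at hm
  simp only [WithBot.unbotD_coe] at hm
  rw [hw, WithBot.coe_le_coe]
  have ht : (0 : ℝ) < t := by exact_mod_cast h.1
  calc w = w / t * t := by field_simp
  _ ≤ lamA * t := by apply mul_le_mul_of_nonneg_right hm ht.le
  _ = t * lamA := mul_comm _ _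

lemma circuit_mean_eq_iff {A : Matrix (Fin n) (Fin n) Rmax} {lamA : ℝ} {t : ℕ} {p : ℕ → Fin n}
    (h : IsCircuit A t p) : mean A t p = lamA ↔ weight A t p = (((t : ℝ) * lamA : ℝ) : Rmax) := by
  obtain ⟨w, hw⟩ := weight_coe_of_walk h.2.1
  have ht : (0 : ℝ) < t := by exact_mod_cast h.1
  rw [mean, hw]
  simp only [WithBot.unbotD_coe, WithBot.coe_inj]
  constructor
  · intro he; field_simp at he; rw [he]
  · intro he; rw [he]; field_simp

end MaxPlusAux

namespace MaxPlusAux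
open MaxPlus

variable {n : ℕ}

/-- The walk obtained by excising the segment `[a, b]` (with `p a = p b`). -/
def excise (a d : ℕ) (p : ℕ → Fin n) : ℕ → Fin n := fun k => if k < a then p k else p (k + d)

lemma excise_arcs (A : Matrix (Fin n) (Fin n) Rmax) {a b t : ℕ} (hab : a < b) (hbt : b ≤ t)
    {p : ℕ → Fin n} (hpab : p a = p b) (k : ℕ) (hk : k < t - (b - a)) :
    A (excise a (b - a) p k) (excise a (b - a) p (k + 1)) =
      if k < a then A (p k) (p (k + 1)) else A (p (k + (b - a))) (p (k + 1 + (b - a))) := by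
  unfold excise
  by_cases hka : k < a
  · simp only [if_pos hka]
    by_cases hk1 : k + 1 < a
    · rw [if_pos hk1]
    · rw [if_neg hk1, show k + 1 + (b - a) = b by omega, ← hpab, show a = k + 1 by omega]
  · simp only [if_neg hka, if_neg (by omega : ¬ k + 1 < a)]

lemma excise_weight (A : Matrix (Fin n) (Fin n) Rmax) {a b t : ℕ} (hab : a < b) (hbt : b ≤ t)
    {p : ℕ → Fin n} (hpab : p a = p b) :
    weight A t p = weight A (t - (b - a)) (excise a (b - a) p)
      + weight A (b - a) (fun k => p (a + k)) := by
  set d := b - a with hd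
  set f : ℕ → Rmax := fun k => A (p k) (p (k + 1)) with hf
  have h1 : weight A t p = ∑ k ∈ Finset.range a, f k
      + (∑ k ∈ Finset.Ico a b, f k + ∑ k ∈ Finset.Ico b t, f k) := by
    rw [weight, Finset.range_eq_Ico,
      ← Finset.sum_Ico_consecutive f (Nat.zero_le a) (le_trans hab.le hbt),
      ← Finset.sum_Ico_consecutive f hab.le hbt, ← Finset.range_eq_Ico]
  have h2 : weight A (t - d) (excise a d p) = ∑ k ∈ Finset.range a, f k
      + ∑ k ∈ Finset.Ico b t, f k := by
    rw [weight, Finset.range_eq_Ico,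
      ← Finset.sum_Ico_consecutive _ (Nat.zero_le a) (by omega : a ≤ t - d),
      ← Finset.range_eq_Ico]
    congr 1
    · apply Finset.sum_congr rfl
      intro k hk
      have hka := Finset.mem_range.mp hk
      rw [excise_arcs A hab hbt hpab k (by omega), if_pos hka]
    · rw [Finset.sum_Ico_eq_sum_range, Finset.sum_Ico_eq_sum_range]
      apply Finset.sum_congr (by congr 1; omega)
      · intro k hk
        have hk' := Finset.mem_range.mp hk
        rw [excise_arcs A hab hbt hpab (a + k) (by omega), if_neg (by omega), hf]
        simp only []
        congr 2 <;> omega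
  have h3 : weight A d (fun k => p (a + k)) = ∑ k ∈ Finset.Ico a b, f k := by
    rw [Finset.sum_Ico_eq_sum_range, weight]
    apply Finset.sum_congr (by congr 1)
    intro k _
    rfl
  rw [h1, h2, h3]; abel

lemma excise_walk {A : Matrix (Fin n) (Fin n) Rmax} {a b t : ℕ} (hab : a < b) (hbt : b ≤ t)
    {p : ℕ → Fin n} (hpab : p a = p b) (hw : IsWalk A t p) :
    IsWalk A (t - (b - a)) (excise a (b - a) p) := by
  intro k hk
  rw [excise_arcs A hab hbt hpab k hk]
  by_cases hka : k < a
  · rw [if_pos hka]; exact hw k (by omega)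
  · rw [if_neg hka]
    have : k + 1 + (b - a) = (k + (b - a)) + 1 := by omega
    rw [this]
    exact hw _ (by omega)

lemma excise_zero {a b : ℕ} {p : ℕ → Fin n} (hab : a < b) (hpab : p a = p b) :
    excise a (b - a) p 0 = p 0 := by
  unfold excise
  by_cases h : 0 < a
  · rw [if_pos h]
  · rw [if_neg h, show 0 + (b - a) = b by omega, ← hpab, show a = 0 by omega]

lemma excise_end {a b t : ℕ} (hab : a < b) (hbt : b ≤ t) (p : ℕ → Fin n) :
    excise a (b - a) p (t - (b - a)) = p t := by
  unfold excise
  rw [if_neg (by omega), show t - (b - a) + (b - a) = t by omega]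

/-- The excised segment is a circuit. -/
lemma seg_circuit {A : Matrix (Fin n) (Fin n) Rmax} {a b t : ℕ} (hab : a < b) (hbt : b ≤ t)
    {p : ℕ → Fin n} (hpab : p a = p b) (hw : IsWalk A t p) :
    IsCircuit A (b - a) (fun k => p (a + k)) := by
  refine ⟨by omega, fun k hk => ?_, ?_⟩
  · have : a + (k + 1) = (a + k) + 1 := by omega
    simp only [this]
    exact hw _ (by omega)
  · simp only [show a + (b - a) = b by omega, show a + 0 = a from rfl]
    exact hpab.symm

/-- The excised remainder (endpoints coincide with those of `p`). -/
lemma excise_circuit {A : Matrix (Fin n) (Fin n) Rmax} {a b t : ℕ} (hab : a < b) (hbt : b ≤ t)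
    (hbtlt : b - a < t)
    {p : ℕ → Fin n} (hpab : p a = p b) (hc : IsCircuit A t p) :
    IsCircuit A (t - (b - a)) (excise a (b - a) p) := by
  refine ⟨by omega, excise_walk hab hbt hpab hc.2.1, ?_⟩
  rw [excise_end hab hbt, excise_zero hab hpab, hc.2.2]

end MaxPlusAux

namespace MaxPlusAux
open MaxPlus

variable {n : ℕ}

lemma crit_aux {A : Matrix (Fin n) (Fin n) Rmax} {lamA : ℝ}
    (hlam : IsMaxCircuitMean A lamA) (t : ℕ) :
    ∀ p, IsCircuit A t p → weight A t p = (((t : ℝ) * lamA : ℝ) : Rmax) →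
    ∃ ℓ q, IsCircuit A ℓ q ∧ weight A ℓ q = (((ℓ : ℝ) * lamA : ℝ) : Rmax) ∧ ℓ ≤ n ∧
      ∀ k, k < ℓ → ∀ l, l < ℓ → q k = q l → k = l := by
  induction t using Nat.strong_induction_on with
  | _ t ih =>
    intro p hc hw
    by_cases helem : ∀ k, k < t → ∀ l, l < t → p k = p l → k = l
    · refine ⟨t, p, hc, hw, ?_, helem⟩
      have : (Finset.range t).card ≤ (Finset.univ : Finset (Fin n)).card := by
        apply Finset.card_le_card_of_injOn p (fun x _ => Finset.mem_univ _)
        intro x hx y hy hxy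
        exact helem x (Finset.mem_range.mp hx) y (Finset.mem_range.mp hy) hxy
      simpa using this
    · push_neg at helem
      obtain ⟨k, hk, l, hl, heq, hne⟩ := helem
      obtain ⟨a, b, hab, hbt, hpab⟩ : ∃ a b, a < b ∧ b < t ∧ p a = p b := by
        rcases lt_or_gt_of_ne hne with h | h
        exacts [⟨k, l, h, hl, heq⟩, ⟨l, k, h, hk, heq.symm⟩]
      have hble : b ≤ t := hbt.le
      have hdlt : b - a < t := by omega
      have hseg := seg_circuit hab hble hpab hc.2.1
      have hrem := excise_circuit hab hble hdlt hpab hc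
      have hwseg := circuit_weight_le hlam hseg
      have hwrem := circuit_weight_le hlam hrem
      obtain ⟨ws, hws⟩ := weight_coe_of_walk hseg.2.1
      obtain ⟨wr, hwr⟩ := weight_coe_of_walk hrem.2.1
      have hsplit := excise_weight A hab hble hpab
      rw [hw, hws, hwr, ← WithBot.coe_add, WithBot.coe_inj] at hsplit
      rw [hws, WithBot.coe_le_coe] at hwseg
      rw [hwr, WithBot.coe_le_coe] at hwrem
      apply ih (t - (b - a)) (by omega) (excise a (b - a) p) hrem
      rw [hwr, WithBot.coe_inj]
      have hcast : (t : ℝ) = ((t - (b - a) : ℕ) : ℝ) + ((b - a : ℕ) : ℝ) := by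
        rw [← Nat.cast_add, Nat.sub_add_cancel (by omega : b - a ≤ t)]
      have hkey : ((t - (b - a) : ℕ) : ℝ) * lamA + ((b - a : ℕ) : ℝ) * lamA = wr + ws := by
        rw [← add_mul, ← hcast]; exact hsplit
      linarith [hwseg, hwrem, hkey]

/-- Extraction of an elementary critical circuit. -/
lemma exists_elem_critical {A : Matrix (Fin n) (Fin n) Rmax} {lamA : ℝ}
    (hlam : IsMaxCircuitMean A lamA) :
    ∃ ℓ q, IsCircuit A ℓ q ∧ weight A ℓ q = (((ℓ : ℝ) * lamA : ℝ) : Rmax) ∧ ℓ ≤ n ∧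
      ∀ k, k < ℓ → ∀ l, l < ℓ → q k = q l → k = l := by
  obtain ⟨t₀, p₀, hc₀, hm₀⟩ := hlam.1
  rw [circuit_mean_eq_iff hc₀] at hm₀
  exact crit_aux hlam t₀ p₀ hc₀ hm₀

end MaxPlusAux

namespace MaxPlusAux
open MaxPlus

variable {n : ℕ}

lemma le_mul {A B : Matrix (Fin n) (Fin n) Rmax} (i s j : Fin n) :
    A i s + B s j ≤ mul A B i j :=
  Finset.le_sup (f := fun s => A i s + B s j) (Finset.mem_univ s)

lemma mul_le {A B : Matrix (Fin n) (Fin n) Rmax} {i j : Fin n} {c : Rmax}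
    (h : ∀ s, A i s + B s j ≤ c) : mul A B i j ≤ c :=
  Finset.sup_le fun s _ => h s

lemma one_mul' (hn : 0 < n) (A : Matrix (Fin n) (Fin n) Rmax) : mul (one n) A = A := by
  ext i j
  apply le_antisymm
  · apply mul_le
    intro s
    by_cases h : i = s
    · simp [one, h]
    · simp [one, h]
  · have := le_mul (A := one n) (B := A) i i j
    simpa [one] using this

lemma mul_one' (hn : 0 < n) (A : Matrix (Fin n) (Fin n) Rmax) : mul A (one n) = A := by
  ext i j
  apply le_antisymm
  · apply mul_le
    intro s
    by_cases h : s = j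
    · simp [one, h]
    · simp [one, h]
  · have := le_mul (A := A) (B := one n) i j j
    simpa [one] using this

lemma mul_assoc' (hn : 0 < n) (A B C : Matrix (Fin n) (Fin n) Rmax) :
    mul (mul A B) C = mul A (mul B C) := by
  ext i j
  apply le_antisymm
  · apply mul_le
    intro s
    obtain ⟨r, hr⟩ := sup_attain (fun r => A i r + B r s) hn
    rw [show mul A B i s = _ from hr, add_assoc]
    exact le_trans (add_le_add_right (le_mul r s j) (A i r)) (le_mul i r j)
  · apply mul_le
    intro r
    obtain ⟨s, hs⟩ := sup_attain (fun s => B r s + C s j) hn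
    rw [show mul B C r j = _ from hs, ← add_assoc]
    exact le_trans (add_le_add_left (le_mul i r s) (C s j)) (le_mul i s j)

lemma pow_succ_left (hn : 0 < n) (A : Matrix (Fin n) (Fin n) Rmax) (t : ℕ) :
    pow A (t + 1) = mul A (pow A t) := by
  induction t with
  | zero => show mul (pow A 0) A = mul A (pow A 0); rw [show pow A 0 = one n from rfl, one_mul' hn, mul_one' hn]
  | succ t ih =>
    show mul (pow A (t+1)) A = mul A (pow A (t+1))
    calc mul (pow A (t+1)) A = mul (mul A (pow A t)) A := by rw [ih]
      _ = mul A (mul (pow A t) A) := mul_assoc' hn _ _ _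
      _ = mul A (pow A (t+1)) := rfl

lemma weight_le_pow (A : Matrix (Fin n) (Fin n) Rmax) (t : ℕ) (p : ℕ → Fin n) :
    weight A t p ≤ pow A t (p 0) (p t) := by
  induction t with
  | zero => simp [weight, pow, one]
  | succ t ih =>
    rw [weight, Finset.sum_range_succ, ← weight]
    calc weight A t p + A (p t) (p (t + 1))
        ≤ pow A t (p 0) (p t) + A (p t) (p (t + 1)) := add_le_add_left ih _
      _ ≤ mul (pow A t) A (p 0) (p (t + 1)) := le_mul _ _ _
      _ = pow A (t + 1) (p 0) (p (t + 1)) := rfl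

lemma pow_realized (hn : 0 < n) (A : Matrix (Fin n) (Fin n) Rmax) (t : ℕ) (i j : Fin n) :
    pow A t i j = ⊥ ∨ ∃ p, p 0 = i ∧ p t = j ∧ weight A t p = pow A t i j := by
  induction t generalizing j with
  | zero =>
    by_cases h : i = j
    · exact Or.inr ⟨fun _ => i, rfl, h, by simp [weight, pow, one, h]⟩
    · exact Or.inl (by simp [pow, one, h])
  | succ t ih =>
    obtain ⟨s, hs⟩ := sup_attain (fun s => pow A t i s + A s j) hn
    have hps : pow A (t + 1) i j = pow A t i s + A s j := hs
    by_cases hbot : pow A t i s + A s j = ⊥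
    · exact Or.inl (hps.trans hbot)
    · obtain ⟨h1, h2⟩ := add_ne_bot hbot
      rcases ih s with h | ⟨q, hq0, hqt, hqw⟩
      · exact absurd h h1
      right
      refine ⟨fun k => if k ≤ t then q k else j, by simpa using hq0, by simp, ?_⟩
      rw [weight, Finset.sum_range_succ]
      have harc : (fun k => if k ≤ t then q k else j) t = q t := by simp
      have heq : ∑ k ∈ Finset.range t,
          A ((fun k => if k ≤ t then q k else j) k) ((fun k => if k ≤ t then q k else j) (k+1))
          = weight A t q := by
        apply Finset.sum_congr rfl
        intro k hk
        have hk' := Finset.mem_range.mp hk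
        simp only [if_pos (by omega : k ≤ t), if_pos (by omega : k + 1 ≤ t)]
      rw [heq, if_pos (le_refl t), if_neg (by omega : ¬ t + 1 ≤ t), hqt, hqw, hps]

end MaxPlusAux

namespace MaxPlusAux
open MaxPlus

variable {n : ℕ}

/-- normalized best-walk-to-`v` vector. -/
def xvec (A : Matrix (Fin n) (Fin n) Rmax) (lamA : ℝ) (v : Fin n) : Fin n → Rmax :=
  fun j => (Finset.Icc 1 n).sup fun t => pow A t j v + ((-(t : ℝ) * lamA : ℝ) : Rmax)

section eigen

variable {A : Matrix (Fin n) (Fin n) Rmax} {lamA : ℝ} {v : Fin n}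
  (hlam : IsMaxCircuitMean A lamA) (hn : 0 < n)

include hlam hn in
lemma pow_norm_le : ∀ t, 1 ≤ t → ∀ j, pow A t j v + ((-(t : ℝ) * lamA : ℝ) : Rmax)
    ≤ xvec A lamA v j := by
  intro t
  induction t using Nat.strong_induction_on with
  | _ t ih =>
    intro ht j
    by_cases htn : t ≤ n
    · exact Finset.le_sup (f := fun t => pow A t j v + ((-(t : ℝ) * lamA : ℝ) : Rmax)) (Finset.mem_Icc.mpr ⟨ht, htn⟩)
    · push_neg at htn
      by_cases hbot : pow A t j v = ⊥
      · rw [hbot, WithBot.bot_add]; exact bot_le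
      rcases pow_realized hn A t j v with h | ⟨p, hp0, hpt, hpw⟩
      · exact absurd h hbot
      have hwalk : IsWalk A t p := walk_of_weight_ne_bot (hpw ▸ hbot)
      -- pigeonhole among p 0, ..., p n
      obtain ⟨α, β, hne, heq⟩ := Fintype.exists_ne_map_eq_of_card_lt
        (fun m : Fin (n + 1) => p m) (by simp)
      obtain ⟨a, b, hab, hbn, hpab⟩ : ∃ a b : ℕ, a < b ∧ b ≤ n ∧ p a = p b := by
        rcases lt_or_gt_of_ne hne with h | h
        · exact ⟨α, β, h, Nat.lt_succ_iff.mp β.isLt, heq⟩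
        · exact ⟨β, α, h, Nat.lt_succ_iff.mp α.isLt, heq.symm⟩
      have hble : b ≤ t := le_trans hbn htn.le
      set d := b - a with hd
      set t' := t - d with ht'
      have hd1 : 1 ≤ d := by omega
      have ht'1 : 1 ≤ t' := by omega
      have ht't : t' < t := by omega
      have hseg := seg_circuit hab hble hpab hwalk
      have hwseg := circuit_weight_le hlam hseg
      have hle : pow A t j v ≤ pow A t' j v + (((d : ℝ) * lamA : ℝ) : Rmax) := by
        rw [← hpw, excise_weight A hab hble hpab]
        apply add_le_add
        · have := weight_le_pow A t' (excise a d p)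
          rwa [excise_zero hab hpab, hp0, ht', hd, excise_end hab hble, hpt] at this
        · exact hwseg
      calc pow A t j v + ((-(t : ℝ) * lamA : ℝ) : Rmax)
          ≤ (pow A t' j v + (((d : ℝ) * lamA : ℝ) : Rmax)) + ((-(t : ℝ) * lamA : ℝ) : Rmax) :=
            add_le_add_left hle _
        _ = pow A t' j v + ((-(t' : ℝ) * lamA : ℝ) : Rmax) := by
            rw [add_assoc, ← WithBot.coe_add]
            congr 1
            rw [WithBot.coe_inj]
            have : ((t' : ℕ) : ℝ) = (t : ℝ) - (d : ℝ) := by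
              rw [ht', Nat.cast_sub (by omega : d ≤ t)]
            rw [this]; ring
        _ ≤ xvec A lamA v j := ih t' ht't ht'1 j

end eigen

end MaxPlusAux

namespace MaxPlusAux
open MaxPlus

variable {n : ℕ}

section eigen2

variable {A : Matrix (Fin n) (Fin n) Rmax} {lamA : ℝ} {v : Fin n}
  (hlam : IsMaxCircuitMean A lamA) (hn : 0 < n)
  {ℓ : ℕ} {q : ℕ → Fin n} (hq : IsCircuit A ℓ q)
  (hqw : weight A ℓ q = (((ℓ : ℝ) * lamA : ℝ) : Rmax)) (hℓn : ℓ ≤ n) (hv : q 0 = v)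

include hlam hn hq hqw hℓn hv

lemma xvec_zero : xvec A lamA v v = 0 := by
  apply le_antisymm
  · apply Finset.sup_le
    intro t htm
    obtain ⟨ht1, htn⟩ := Finset.mem_Icc.mp htm
    by_cases hbot : pow A t v v = ⊥
    · rw [hbot, WithBot.bot_add]; exact bot_le
    rcases pow_realized hn A t v v with h | ⟨p, hp0, hpt, hpw⟩
    · exact absurd h hbot
    have hwalk : IsWalk A t p := walk_of_weight_ne_bot (hpw ▸ hbot)
    have hcirc : IsCircuit A t p := ⟨ht1, hwalk, hpt.trans hp0.symm⟩
    have hwle := circuit_weight_le hlam hcirc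
    rw [hpw] at hwle
    calc pow A t v v + ((-(t : ℝ) * lamA : ℝ) : Rmax)
        ≤ (((t : ℝ) * lamA : ℝ) : Rmax) + ((-(t : ℝ) * lamA : ℝ) : Rmax) :=
          add_le_add_left hwle _
      _ = 0 := by rw [← WithBot.coe_add]; norm_num
  · have h2 := weight_le_pow A ℓ q
    rw [hq.2.2, hv] at h2
    have h3 : (0 : Rmax) ≤ pow A ℓ v v + ((-(ℓ : ℝ) * lamA : ℝ) : Rmax) := by
      calc (0 : Rmax) = (((ℓ : ℝ) * lamA : ℝ) : Rmax) + ((-(ℓ : ℝ) * lamA : ℝ) : Rmax) := by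
            rw [← WithBot.coe_add]; norm_num
        _ ≤ pow A ℓ v v + ((-(ℓ : ℝ) * lamA : ℝ) : Rmax) :=
            add_le_add_left (hqw ▸ h2) _
    exact le_trans h3 (Finset.le_sup
      (f := fun t => pow A t v v + ((-(t : ℝ) * lamA : ℝ) : Rmax))
      (Finset.mem_Icc.mpr ⟨hq.1, hℓn⟩))

lemma eigen_eq (i : Fin n) :
    (Finset.univ.sup fun k => A i k + xvec A lamA v k) = ((lamA : ℝ) : Rmax) + xvec A lamA v i := by
  apply le_antisymm
  · apply Finset.sup_le
    intro k _
    -- xvec k is attained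
    obtain ⟨t₀, ht₀m, ht₀⟩ := Finset.exists_mem_eq_sup (Finset.Icc 1 n)
      (Finset.nonempty_Icc.mpr hn) (fun t => pow A t k v + ((-(t : ℝ) * lamA : ℝ) : Rmax))
    obtain ⟨ht₀1, ht₀n⟩ := Finset.mem_Icc.mp ht₀m
    have hstep : A i k + pow A t₀ k v ≤ pow A (t₀ + 1) i v := by
      rw [pow_succ_left hn]
      exact le_mul i k v
    have hc : (((-(t₀ : ℝ) * lamA : ℝ) : Rmax)) =
        ((-((t₀ : ℝ) + 1) * lamA : ℝ) : Rmax) + ((lamA : ℝ) : Rmax) := by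
      rw [← WithBot.coe_add, WithBot.coe_inj]; ring
    calc A i k + xvec A lamA v k
        = A i k + (pow A t₀ k v + ((-(t₀ : ℝ) * lamA : ℝ) : Rmax)) := by
          rw [show xvec A lamA v k = _ from ht₀]
      _ = (A i k + pow A t₀ k v) + ((-(t₀ : ℝ) * lamA : ℝ) : Rmax) := by rw [add_assoc]
      _ ≤ pow A (t₀ + 1) i v + ((-(t₀ : ℝ) * lamA : ℝ) : Rmax) := add_le_add_left hstep _
      _ = (pow A (t₀ + 1) i v + ((-((t₀ : ℝ) + 1) * lamA : ℝ) : Rmax)) + ((lamA : ℝ) : Rmax) := by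
          rw [hc, add_assoc]
      _ ≤ xvec A lamA v i + ((lamA : ℝ) : Rmax) := by
          apply add_le_add_left
          have := pow_norm_le (v := v) hlam hn (t₀ + 1) (by omega) i
          simpa using this
      _ = ((lamA : ℝ) : Rmax) + xvec A lamA v i := add_comm _ _
  · by_cases hxi : xvec A lamA v i = ⊥
    · rw [hxi, WithBot.add_bot]; exact bot_le
    obtain ⟨t₀, ht₀m, ht₀⟩ := Finset.exists_mem_eq_sup (Finset.Icc 1 n)
      (Finset.nonempty_Icc.mpr hn) (fun t => pow A t i v + ((-(t : ℝ) * lamA : ℝ) : Rmax))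
    obtain ⟨ht₀1, ht₀n⟩ := Finset.mem_Icc.mp ht₀m
    obtain ⟨s, rfl⟩ : ∃ s, t₀ = s + 1 := ⟨t₀ - 1, by omega⟩
    obtain ⟨k₀, hk₀⟩ := sup_attain (fun k => A i k + pow A s k v) hn
    have hxieq : xvec A lamA v i
        = (A i k₀ + pow A s k₀ v) + ((-((s : ℝ) + 1) * lamA : ℝ) : Rmax) := by
      rw [show xvec A lamA v i = _ from ht₀, pow_succ_left hn,
        show mul A (pow A s) i v = _ from hk₀]
      push_cast
      ring_nf
    have hc : ((-((s : ℝ) + 1) * lamA : ℝ) : Rmax) + ((lamA : ℝ) : Rmax)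
        = ((-(s : ℝ) * lamA : ℝ) : Rmax) := by
      rw [← WithBot.coe_add, WithBot.coe_inj]; ring
    have hbound : pow A s k₀ v + ((-(s : ℝ) * lamA : ℝ) : Rmax) ≤ xvec A lamA v k₀ := by
      rcases Nat.eq_zero_or_pos s with rfl | hs
      · by_cases hkv : k₀ = v
        · rw [hkv, xvec_zero hlam hn hq hqw hℓn hv,
            show pow A 0 v v = (0 : Rmax) from if_pos rfl]
          norm_num
        · rw [show pow A 0 k₀ v = (⊥ : Rmax) from if_neg hkv, WithBot.bot_add]
          exact bot_le
      · exact pow_norm_le (v := v) hlam hn s hs k₀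
    calc ((lamA : ℝ) : Rmax) + xvec A lamA v i
        = (A i k₀ + pow A s k₀ v + ((-((s : ℝ) + 1) * lamA : ℝ) : Rmax)) + ((lamA : ℝ) : Rmax) := by
          rw [hxieq, add_comm]
      _ = A i k₀ + (pow A s k₀ v + (((-((s : ℝ) + 1) * lamA : ℝ) : Rmax) + ((lamA : ℝ) : Rmax))) := by
          rw [add_assoc, add_assoc]
      _ = A i k₀ + (pow A s k₀ v + ((-(s : ℝ) * lamA : ℝ) : Rmax)) := by rw [hc]
      _ ≤ A i k₀ + xvec A lamA v k₀ := add_le_add_right hbound _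
      _ ≤ Finset.univ.sup fun k => A i k + xvec A lamA v k :=
          Finset.le_sup (f := fun k => A i k + xvec A lamA v k) (Finset.mem_univ k₀)

lemma is_eigen : IsEigenvalue A ((lamA : ℝ) : Rmax) := by
  refine ⟨xvec A lamA v, ⟨v, ?_⟩, eigen_eq hlam hn hq hqw hℓn hv⟩
  rw [xvec_zero hlam hn hq hqw hℓn hv]
  simp

end eigen2

end MaxPlusAux

namespace MaxPlusAux
open MaxPlus

variable {n : ℕ}

lemma coe_unbot' {a : Rmax} (h : a ≠ ⊥) : a = ((WithBot.unbotD 0 a : ℝ) : Rmax) := by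
  cases a with
  | none => exact absurd rfl h
  | some r => rfl

lemma add_ne_bot' {a b : Rmax} (ha : a ≠ ⊥) (hb : b ≠ ⊥) : a + b ≠ ⊥ := by
  obtain ⟨r, rfl⟩ := exists_coe_of_ne_bot ha
  obtain ⟨s, rfl⟩ := exists_coe_of_ne_bot hb
  rw [← WithBot.coe_add]
  exact WithBot.coe_ne_bot

lemma eigenvalue_le {A : Matrix (Fin n) (Fin n) Rmax} {lamA : ℝ}
    (hlam : IsMaxCircuitMean A lamA) :
    ∀ lam : Rmax, IsEigenvalue A lam → lam ≤ ((lamA : ℝ) : Rmax) := by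
  intro lam hev
  cases lam with
  | none => exact bot_le
  | some l =>
    obtain ⟨x, ⟨i₀, hi₀⟩, hx⟩ := hev
    have hn : 0 < n := i₀.pos
    have hpick : ∀ j, x j ≠ ⊥ → ∃ k, A j k + x k = ((l : ℝ) : Rmax) + x j := by
      intro j _
      obtain ⟨k, hk⟩ := sup_attain (fun k => A j k + x k) hn
      exact ⟨k, by rw [← hk, hx j]; rfl⟩
    set g : Fin n → Fin n := fun j =>
      if h : x j ≠ ⊥ then Classical.choose (hpick j h) else j with hg
    have hstep : ∀ j, x j ≠ ⊥ →
        A j (g j) + x (g j) = ((l : ℝ) : Rmax) + x j ∧ x (g j) ≠ ⊥ ∧ A j (g j) ≠ ⊥ := by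
      intro j hj
      have heq : A j (g j) + x (g j) = ((l : ℝ) : Rmax) + x j := by
        rw [hg]; simp only [dif_pos hj]
        exact Classical.choose_spec (hpick j hj)
      have hrhs : ((l : ℝ) : Rmax) + x j ≠ ⊥ := add_ne_bot' WithBot.coe_ne_bot hj
      rw [← heq] at hrhs
      obtain ⟨h1, h2⟩ := add_ne_bot hrhs
      exact ⟨heq, h2, h1⟩
    set f : ℕ → Fin n := fun m => g^[m] i₀ with hf
    have hfs : ∀ m, f (m + 1) = g (f m) := by
      intro m; rw [hf]; exact Function.iterate_succ_apply' g m i₀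
    have hfb : ∀ m, x (f m) ≠ ⊥ := by
      intro m
      induction m with
      | zero => exact hi₀
      | succ m ih => rw [hfs m]; exact (hstep (f m) ih).2.1
    have harc : ∀ m, A (f m) (f (m + 1)) + x (f (m + 1)) = ((l : ℝ) : Rmax) + x (f m) := by
      intro m
      rw [hfs m]
      exact (hstep (f m) (hfb m)).1
    have harcb : ∀ m, A (f m) (f (m + 1)) ≠ ⊥ := by
      intro m
      rw [hfs m]
      exact (hstep (f m) (hfb m)).2.2
    -- real-valued versions
    set X : ℕ → ℝ := fun m => WithBot.unbotD 0 (x (f m)) with hX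
    set al : ℕ → ℝ := fun m => WithBot.unbotD 0 (A (f m) (f (m + 1))) with hal
    have hXc : ∀ m, x (f m) = ((X m : ℝ) : Rmax) := fun m => coe_unbot' (hfb m)
    have halc : ∀ m, A (f m) (f (m + 1)) = ((al m : ℝ) : Rmax) := fun m => coe_unbot' (harcb m)
    have hrel : ∀ m, al m = l + X m - X (m + 1) := by
      intro m
      have := harc m
      rw [halc m, hXc (m + 1), hXc m, ← WithBot.coe_add, ← WithBot.coe_add,
        WithBot.coe_inj] at this
      linarith [this]
    -- pigeonhole
    obtain ⟨α, β, hne, heq⟩ := Fintype.exists_ne_map_eq_of_card_lt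
      (fun m : Fin (n + 1) => f m) (by simp)
    obtain ⟨a, b, hab, hbn, hpab⟩ : ∃ a b : ℕ, a < b ∧ b ≤ n ∧ f a = f b := by
      rcases lt_or_gt_of_ne hne with h | h
      · exact ⟨α, β, h, Nat.lt_succ_iff.mp β.isLt, heq⟩
      · exact ⟨β, α, h, Nat.lt_succ_iff.mp α.isLt, heq.symm⟩
    set t := b - a with htdef
    set p : ℕ → Fin n := fun k => f (a + k) with hp
    have hcirc : IsCircuit A t p := by
      refine ⟨by omega, fun k hk => ?_, ?_⟩
      · show A (f (a + k)) (f (a + (k + 1))) ≠ ⊥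
        rw [show a + (k + 1) = (a + k) + 1 by omega]
        exact harcb (a + k)
      · show f (a + (b - a)) = f (a + 0)
        rw [show a + (b - a) = b by omega, show a + 0 = a from rfl]
        exact hpab.symm
    have hweight : weight A t p = (((t : ℝ) * l : ℝ) : Rmax) := by
      have hterm : ∀ k, A (p k) (p (k + 1)) = ((al (a + k) : ℝ) : Rmax) := by
        intro k
        show A (f (a + k)) (f (a + (k + 1))) = _
        rw [show a + (k + 1) = (a + k) + 1 by omega]
        exact halc (a + k)
      rw [weight]
      calc ∑ k ∈ Finset.range t, A (p k) (p (k + 1))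
          = ∑ k ∈ Finset.range t, ((al (a + k) : ℝ) : Rmax) :=
            Finset.sum_congr rfl fun k _ => hterm k
        _ = ((∑ k ∈ Finset.range t, al (a + k) : ℝ) : Rmax) := (coe_sum _ _).symm
        _ = (((t : ℝ) * l : ℝ) : Rmax) := by
            rw [WithBot.coe_inj]
            have hsum : ∑ k ∈ Finset.range t, al (a + k)
                = ∑ k ∈ Finset.range t, (l + X (a + k) - X (a + k + 1)) :=
              Finset.sum_congr rfl fun k _ => by rw [hrel (a + k)]
            have htel : ∑ k ∈ Finset.range t, (X (a + (k + 1)) - X (a + k)) = X (a + t) - X (a + 0) :=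
              Finset.sum_range_sub (fun k => X (a + k)) t
            have hXab : X (a + t) = X (a + 0) := by
              show X (a + (b - a)) = X a
              rw [show a + (b - a) = b by omega, hX]
              simp only []
              rw [hpab]
            rw [hsum]
            have : ∑ k ∈ Finset.range t, (l + X (a + k) - X (a + k + 1))
                = ∑ k ∈ Finset.range t, (l - (X (a + (k + 1)) - X (a + k))) := by
              apply Finset.sum_congr rfl
              intro k _
              rw [show a + (k + 1) = a + k + 1 by omega]
              ring
            rw [this, Finset.sum_sub_distrib, htel, hXab, Finset.sum_const, Finset.card_range]
            push_cast [nsmul_eq_mul]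
            ring
    have hmean : mean A t p = l := (circuit_mean_eq_iff hcirc).mpr hweight
    have := hlam.2 t p hcirc
    rw [hmean] at this
    exact WithBot.coe_le_coe.mpr this

end MaxPlusAux

namespace MaxPlusAux
open MaxPlus

variable {n : ℕ}

/-- The matrix `A ⊕ t ⊗ I`. -/
noncomputable def Mt (A : Matrix (Fin n) (Fin n) Rmax) (t : ℝ) : Matrix (Fin n) (Fin n) Rmax :=
  fun i j => A i j ⊔ (if i = j then ((t : ℝ) : Rmax) else ⊥)

lemma charPoly_coe (A : Matrix (Fin n) (Fin n) Rmax) (t : ℝ) :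
    charPoly A ((t : ℝ) : Rmax) = det (Mt A t) := rfl

lemma Mt_offdiag {A : Matrix (Fin n) (Fin n) Rmax} {t : ℝ} {i j : Fin n} (h : i ≠ j) :
    Mt A t i j = A i j := by
  rw [Mt, if_neg h, sup_bot_eq]

lemma Mt_diag_le {A : Matrix (Fin n) (Fin n) Rmax} {lamA : ℝ}
    (hlam : IsMaxCircuitMean A lamA) {t : ℝ} (ht : lamA ≤ t) (i : Fin n) :
    Mt A t i i ≤ ((t : ℝ) : Rmax) := by
  rw [Mt, if_pos rfl, sup_le_iff]
  refine ⟨?_, le_refl _⟩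
  by_cases hbot : A i i = ⊥
  · rw [hbot]; exact bot_le
  · have hcirc : IsCircuit A 1 (fun _ => i) := ⟨Nat.one_pos, fun k hk => by
      simpa using hbot, rfl⟩
    have := circuit_weight_le hlam hcirc
    rw [weight, Finset.sum_range_one] at this
    simp only [Nat.cast_one, one_mul] at this
    exact le_trans this (WithBot.coe_le_coe.mpr ht)

lemma Mt_circuit_le {A : Matrix (Fin n) (Fin n) Rmax} {lamA : ℝ}
    (hlam : IsMaxCircuitMean A lamA) {t : ℝ} (ht : lamA ≤ t) (ℓ : ℕ) :
    ∀ p, IsCircuit (Mt A t) ℓ p → weight (Mt A t) ℓ p ≤ (((ℓ : ℝ) * t : ℝ) : Rmax) := by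
  induction ℓ using Nat.strong_induction_on with
  | _ ℓ ih =>
    intro p hc
    by_cases hloop : ∃ k, k < ℓ ∧ p k = p (k + 1)
    · obtain ⟨k, hk, hpk⟩ := hloop
      have harc : Mt A t (p k) (p (k + 1)) ≤ ((t : ℝ) : Rmax) := by
        rw [← hpk]; exact Mt_diag_le hlam ht (p k)
      rcases Nat.lt_or_ge 1 ℓ with hℓ2 | hℓ1
      · -- excise the loop
        have hble : k + 1 ≤ ℓ := hk
        have hab : k < k + 1 := Nat.lt_succ_self k
        have hrem := excise_circuit hab hble (by omega) hpk hc
        have hsplit := excise_weight (Mt A t) hab hble hpk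
        have hseg : weight (Mt A t) (k + 1 - k) (fun j => p (k + j)) ≤ ((t : ℝ) : Rmax) := by
          rw [show k + 1 - k = 1 by omega, weight, Finset.sum_range_one]
          simpa using harc
        have hrem_le := ih (ℓ - (k + 1 - k)) (by omega) _ hrem
        calc weight (Mt A t) ℓ p
            = weight (Mt A t) (ℓ - (k + 1 - k)) (excise k (k + 1 - k) p)
              + weight (Mt A t) (k + 1 - k) (fun j => p (k + j)) := hsplit
          _ ≤ (((↑(ℓ - (k + 1 - k)) : ℝ) * t : ℝ) : Rmax) + ((t : ℝ) : Rmax) :=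
              add_le_add hrem_le hseg
          _ = (((ℓ : ℝ) * t : ℝ) : Rmax) := by
              rw [← WithBot.coe_add, WithBot.coe_inj,
                Nat.cast_sub (by omega : k + 1 - k ≤ ℓ), show k + 1 - k = 1 by omega]
              push_cast
              ring
      · -- ℓ = 1
        have hl1 : ℓ = 1 := by omega
        subst hl1
        have hk0 : k = 0 := by omega
        subst hk0
        rw [weight, Finset.sum_range_one]
        simpa using harc
    · push_neg at hloop
      have harcs : ∀ k, k < ℓ → Mt A t (p k) (p (k + 1)) = A (p k) (p (k + 1)) :=
        fun k hk => Mt_offdiag (hloop k hk)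
      have hweq : weight (Mt A t) ℓ p = weight A ℓ p := by
        apply Finset.sum_congr rfl
        intro k hk
        exact harcs k (Finset.mem_range.mp hk)
      have hcircA : IsCircuit A ℓ p := by
        refine ⟨hc.1, fun k hk => ?_, hc.2.2⟩
        rw [← harcs k hk]
        exact hc.2.1 k hk
      rw [hweq]
      calc weight A ℓ p ≤ (((ℓ : ℝ) * lamA : ℝ) : Rmax) := circuit_weight_le hlam hcircA
        _ ≤ (((ℓ : ℝ) * t : ℝ) : Rmax) := by
            rw [WithBot.coe_le_coe]
            exact mul_le_mul_of_nonneg_left ht (by positivity)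

lemma perm_term_le {A : Matrix (Fin n) (Fin n) Rmax} {lamA : ℝ}
    (hlam : IsMaxCircuitMean A lamA) {t : ℝ} (ht : lamA ≤ t) (π : Equiv.Perm (Fin n)) :
    ∑ i, Mt A t i (π i) ≤ (((n : ℝ) * t : ℝ) : Rmax) := by
  by_cases hbot : ∃ i, Mt A t i (π i) = ⊥
  · obtain ⟨i, hi⟩ := hbot
    rw [sum_eq_bot_of_mem Finset.univ _ ⟨i, Finset.mem_univ i, hi⟩]
    exact bot_le
  push_neg at hbot
  set N := orderOf π with hN
  have hN0 : 0 < N := orderOf_pos π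
  have hπN : π ^ N = 1 := pow_orderOf_eq_one π
  have hcirc : ∀ i : Fin n, IsCircuit (Mt A t) N (fun r => (π ^ r) i) := by
    intro i
    refine ⟨hN0, fun r hr => ?_, show (π ^ N) i = (π ^ 0) i by rw [hπN, pow_zero]⟩
    show Mt A t ((π ^ r) i) ((π ^ (r + 1)) i) ≠ ⊥
    have hps : (π ^ (r + 1)) i = π ((π ^ r) i) := by
      rw [pow_succ']; rfl
    rw [hps]
    exact hbot _
  have hw : ∀ i : Fin n, weight (Mt A t) N (fun r => (π ^ r) i) ≤ (((N : ℝ) * t : ℝ) : Rmax) :=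
    fun i => Mt_circuit_le hlam ht N _ (hcirc i)
  have hsmul : N • (∑ i, Mt A t i (π i)) ≤ (((n : ℝ) * ((N : ℝ) * t) : ℝ) : Rmax) := by
    calc N • (∑ i, Mt A t i (π i))
        = ∑ r ∈ Finset.range N, ∑ i, Mt A t i (π i) := by
          rw [Finset.sum_const, Finset.card_range]
      _ = ∑ r ∈ Finset.range N, ∑ i, Mt A t ((π ^ r) i) (π ((π ^ r) i)) := by
          apply Finset.sum_congr rfl
          intro r _
          exact (Equiv.sum_comp (π ^ r) (fun i => Mt A t i (π i))).symm
      _ = ∑ i, ∑ r ∈ Finset.range N, Mt A t ((π ^ r) i) ((π ^ (r + 1)) i) := by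
          rw [Finset.sum_comm]
          apply Finset.sum_congr rfl
          intro i _
          apply Finset.sum_congr rfl
          intro r _
          congr 1
          rw [pow_succ']; rfl
      _ = ∑ i, weight (Mt A t) N (fun r => (π ^ r) i) := rfl
      _ ≤ ∑ _i : Fin n, (((N : ℝ) * t : ℝ) : Rmax) :=
          Finset.sum_le_sum fun i _ => hw i
      _ = (((n : ℝ) * ((N : ℝ) * t) : ℝ) : Rmax) := by
          rw [Finset.sum_const, Finset.card_univ, Fintype.card_fin, ← WithBot.coe_nsmul]
          rw [WithBot.coe_inj, nsmul_eq_mul]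
  -- divide by N
  cases hS : (∑ i, Mt A t i (π i)) with
  | none => exact bot_le
  | some S =>
    rw [hS, show (some S : Rmax) = ((S : ℝ) : Rmax) from rfl, ← WithBot.coe_nsmul] at hsmul
    show ((S : ℝ) : Rmax) ≤ _
    rw [WithBot.coe_le_coe] at hsmul ⊢
    rw [nsmul_eq_mul] at hsmul
    nlinarith [hsmul, (by exact_mod_cast hN0 : (0:ℝ) < (N:ℝ))]

lemma charPoly_eq_nt {A : Matrix (Fin n) (Fin n) Rmax} {lamA : ℝ}
    (hlam : IsMaxCircuitMean A lamA) {t : ℝ} (ht : lamA ≤ t) :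
    charPoly A ((t : ℝ) : Rmax) = (((n : ℝ) * t : ℝ) : Rmax) := by
  rw [charPoly_coe]
  apply le_antisymm
  · exact Finset.sup_le fun π _ => perm_term_le hlam ht π
  · have hconst : (((n : ℝ) * t : ℝ) : Rmax) = ∑ _i : Fin n, ((t : ℝ) : Rmax) := by
      rw [Finset.sum_const, Finset.card_univ, Fintype.card_fin, ← WithBot.coe_nsmul,
        WithBot.coe_inj, nsmul_eq_mul]
    have hid : ∑ _i : Fin n, ((t : ℝ) : Rmax) ≤ ∑ i, Mt A t i ((1 : Equiv.Perm (Fin n)) i) := by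
      apply Finset.sum_le_sum
      intro i _
      show ((t : ℝ) : Rmax) ≤ Mt A t i i
      rw [Mt]
      simp only [if_pos rfl]
      exact le_sup_right
    rw [hconst]
    exact le_trans hid (Finset.le_sup
      (f := fun π : Equiv.Perm (Fin n) => ∑ i, Mt A t i (π i)) (Finset.mem_univ 1))

end MaxPlusAux

namespace MaxPlusAux
open MaxPlus

variable {n : ℕ}

lemma charPoly_gt {A : Matrix (Fin n) (Fin n) Rmax} {lamA : ℝ}
    (hlam : IsMaxCircuitMean A lamA) {t : ℝ} (ht : t < lamA) :
    (((n : ℝ) * t : ℝ) : Rmax) < charPoly A ((t : ℝ) : Rmax) := by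
  obtain ⟨ℓ, q, hq, hqw, hℓn, hinj⟩ := exists_elem_critical hlam
  have hℓ1 : 1 ≤ ℓ := hq.1
  set S : Finset (Fin n) := (Finset.range ℓ).image q with hS
  have hmemS : ∀ j, j ∈ S ↔ ∃ m, m < ℓ ∧ q m = j := by
    intro j
    simp [hS, Finset.mem_image, Finset.mem_range]
  set σ : Fin n → Fin n := fun j =>
    if h : ∃ m, m < ℓ ∧ q m = j then q ((Classical.choose h + 1) % ℓ) else j with hσ
  have hqℓ : q ℓ = q 0 := hq.2.2
  have hqmod : ∀ m, m < ℓ → q ((m + 1) % ℓ) = q (m + 1) := by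
    intro m hm
    rcases Nat.lt_or_ge (m + 1) ℓ with h | h
    · rw [Nat.mod_eq_of_lt h]
    · have : m + 1 = ℓ := by omega
      rw [this, Nat.mod_self, ← hqℓ]
  have hσ_on : ∀ m, m < ℓ → σ (q m) = q ((m + 1) % ℓ) := by
    intro m hm
    have hex : ∃ m', m' < ℓ ∧ q m' = q m := ⟨m, hm, rfl⟩
    rw [hσ]
    simp only [dif_pos hex]
    obtain ⟨hlt, heq⟩ := Classical.choose_spec hex
    rw [hinj _ hlt _ hm heq]
  have hσ_off : ∀ j, j ∉ S → σ j = j := by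
    intro j hj
    rw [hσ]
    simp only [dif_neg (fun h => hj ((hmemS j).mpr h))]
  have hmodinj : ∀ m m', m < ℓ → m' < ℓ → (m + 1) % ℓ = (m' + 1) % ℓ → m = m' := by
    intro m m' hm hm' h
    rcases Nat.lt_or_ge (m + 1) ℓ with h1 | h1 <;> rcases Nat.lt_or_ge (m' + 1) ℓ with h2 | h2
    · rw [Nat.mod_eq_of_lt h1, Nat.mod_eq_of_lt h2] at h; omega
    · rw [Nat.mod_eq_of_lt h1, show m' + 1 = ℓ by omega, Nat.mod_self] at h; omega
    · rw [Nat.mod_eq_of_lt h2, show m + 1 = ℓ by omega, Nat.mod_self] at h; omega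
    · omega
  have hσS : ∀ m, m < ℓ → σ (q m) ∈ S := by
    intro m hm
    rw [hσ_on m hm]
    exact (hmemS _).mpr ⟨(m + 1) % ℓ, Nat.mod_lt _ (by omega), rfl⟩
  have hinjσ : Function.Injective σ := by
    intro j1 j2 hj
    by_cases h1 : j1 ∈ S <;> by_cases h2 : j2 ∈ S
    · obtain ⟨m1, hm1, rfl⟩ := (hmemS j1).mp h1
      obtain ⟨m2, hm2, rfl⟩ := (hmemS j2).mp h2
      rw [hσ_on m1 hm1, hσ_on m2 hm2] at hj
      have := hinj _ (Nat.mod_lt _ (by omega)) _ (Nat.mod_lt _ (by omega)) hj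
      rw [hmodinj m1 m2 hm1 hm2 this]
    · obtain ⟨m1, hm1, rfl⟩ := (hmemS j1).mp h1
      exact absurd ((hσ_off j2 h2) ▸ hj ▸ hσS m1 hm1) h2
    · obtain ⟨m2, hm2, rfl⟩ := (hmemS j2).mp h2
      exact absurd ((hσ_off j1 h1) ▸ hj.symm ▸ hσS m2 hm2) h1
    · rw [hσ_off j1 h1, hσ_off j2 h2] at hj; exact hj
  set π : Equiv.Perm (Fin n) := Equiv.ofBijective σ
    (Finite.injective_iff_bijective.mp hinjσ) with hπ
  have hπa : ∀ j, π j = σ j := fun j => rfl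
  -- the term of π
  have hcard : S.card = ℓ := by
    rw [hS, Finset.card_image_of_injOn, Finset.card_range]
    intro x hx y hy hxy
    exact hinj x (Finset.mem_range.mp hx) y (Finset.mem_range.mp hy) hxy
  have hsum1 : (((ℓ : ℝ) * lamA : ℝ) : Rmax) ≤ ∑ i ∈ S, Mt A t i (π i) := by
    rw [hS, Finset.sum_image (fun x hx y hy hxy =>
      hinj x (Finset.mem_range.mp hx) y (Finset.mem_range.mp hy) hxy)]
    rw [← hqw, weight]
    apply Finset.sum_le_sum
    intro m hm
    have hm' := Finset.mem_range.mp hm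
    rw [hπa, hσ_on m hm', hqmod m hm']
    exact le_sup_left
  have hsum2 : (((Sᶜ.card : ℝ) * t : ℝ) : Rmax) ≤ ∑ i ∈ Sᶜ, Mt A t i (π i) := by
    calc (((Sᶜ.card : ℝ) * t : ℝ) : Rmax) = ∑ _i ∈ Sᶜ, ((t : ℝ) : Rmax) := by
          rw [Finset.sum_const, ← WithBot.coe_nsmul, WithBot.coe_inj, nsmul_eq_mul]
      _ ≤ ∑ i ∈ Sᶜ, Mt A t i (π i) := by
          apply Finset.sum_le_sum
          intro i hi
          rw [hπa, hσ_off i (Finset.mem_compl.mp hi), Mt]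
          simp only [if_pos rfl]
          exact le_sup_right
  have hterm : (((ℓ : ℝ) * lamA + ((Sᶜ.card : ℝ)) * t : ℝ) : Rmax) ≤ ∑ i, Mt A t i (π i) := by
    rw [← Finset.sum_add_sum_compl S, WithBot.coe_add]
    exact add_le_add hsum1 hsum2
  have hcardc : (Sᶜ.card : ℝ) = (n : ℝ) - (ℓ : ℝ) := by
    rw [Finset.card_compl, hcard, Fintype.card_fin, Nat.cast_sub hℓn]
  have hgt : ((n : ℝ) * t : ℝ) < (ℓ : ℝ) * lamA + ((Sᶜ.card : ℝ)) * t := by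
    rw [hcardc]
    have hℓ1' : (1 : ℝ) ≤ (ℓ : ℝ) := by exact_mod_cast hℓ1
    nlinarith
  calc (((n : ℝ) * t : ℝ) : Rmax) < (((ℓ : ℝ) * lamA + ((Sᶜ.card : ℝ)) * t : ℝ) : Rmax) :=
        WithBot.coe_lt_coe.mpr hgt
    _ ≤ ∑ i, Mt A t i (π i) := hterm
    _ ≤ charPoly A ((t : ℝ) : Rmax) := by
        rw [charPoly_coe]
        exact Finset.le_sup (f := fun π : Equiv.Perm (Fin n) => ∑ i, Mt A t i (π i))
          (Finset.mem_univ π)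

end MaxPlusAux

open MaxPlus MaxPlusAux in
theorem max_root_charPoly_eq_max_eigenvalue {n : ℕ} (A : Matrix (Fin n) (Fin n) Rmax)
    (lamA : ℝ) (hlam : IsMaxCircuitMean A lamA)
    (rs : Fin n → Rmax) (hroots : IsCharRoots A rs) :
    Finset.univ.sup rs = ((lamA : ℝ) : Rmax) ∧
      IsEigenvalue A ((lamA : ℝ) : Rmax) ∧
      ∀ lam : Rmax, IsEigenvalue A lam → lam ≤ ((lamA : ℝ) : Rmax) := by
  obtain ⟨ℓ, q, hq, hqw, hℓn, hinj⟩ := exists_elem_critical hlam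
  have hn : 0 < n := lt_of_lt_of_le hq.1 hℓn
  refine ⟨?_, is_eigen hlam hn hq hqw hℓn rfl, eigenvalue_le hlam⟩
  rcases lt_trichotomy (Finset.univ.sup rs) ((lamA : ℝ) : Rmax) with hlt | heq | hgt
  · exfalso
    obtain ⟨t, hts, htl⟩ : ∃ t : ℝ, Finset.univ.sup rs < ((t : ℝ) : Rmax) ∧ t < lamA := by
      cases hM : Finset.univ.sup rs with
      | none =>
        refine ⟨lamA - 1, ?_, by linarith⟩
        exact WithBot.bot_lt_coe _
      | some m =>
        rw [hM] at hlt
        have hm : m < lamA := WithBot.coe_lt_coe.mp hlt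
        refine ⟨(m + lamA) / 2, ?_, by linarith⟩
        exact WithBot.coe_lt_coe.mpr (by linarith)
    have hsup : ∀ i, ((t : ℝ) : Rmax) ⊔ rs i = ((t : ℝ) : Rmax) := fun i =>
      sup_eq_left.mpr (le_of_lt (lt_of_le_of_lt (Finset.le_sup (Finset.mem_univ i)) hts))
    have hsum : ∑ i, (((t : ℝ) : Rmax) ⊔ rs i) = (((n : ℝ) * t : ℝ) : Rmax) := by
      rw [Finset.sum_congr rfl fun i _ => hsup i, Finset.sum_const, Finset.card_univ,
        Fintype.card_fin, ← WithBot.coe_nsmul, WithBot.coe_inj, nsmul_eq_mul]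
    have h1 := hroots ((t : ℝ) : Rmax)
    rw [hsum] at h1
    exact absurd h1 (ne_of_gt (charPoly_gt hlam htl))
  · exact heq
  · exfalso
    obtain ⟨i₀, hi₀⟩ := sup_attain rs hn
    rw [hi₀] at hgt
    have hne : rs i₀ ≠ ⊥ := by
      intro h
      rw [h] at hgt
      exact absurd hgt (by simp)
    obtain ⟨m, hm⟩ := exists_coe_of_ne_bot hne
    rw [hm] at hgt hi₀
    rw [WithBot.coe_lt_coe] at hgt
    have h1 := hroots ((lamA : ℝ) : Rmax)
    rw [charPoly_eq_nt hlam (le_refl lamA)] at h1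
    have hcarde : (Finset.univ.erase i₀).card = n - 1 := by
      rw [Finset.card_erase_of_mem (Finset.mem_univ i₀), Finset.card_univ, Fintype.card_fin]
    have h2 : ((m + (((n : ℕ) : ℝ) - 1) * lamA : ℝ) : Rmax)
        ≤ ∑ i, (((lamA : ℝ) : Rmax) ⊔ rs i) := by
      rw [← Finset.add_sum_erase _ _ (Finset.mem_univ i₀), WithBot.coe_add]
      apply add_le_add
      · rw [hm]
        exact le_sup_right
      · calc (((((n : ℕ) : ℝ) - 1) * lamA : ℝ) : Rmax)
            = ∑ _i ∈ Finset.univ.erase i₀, ((lamA : ℝ) : Rmax) := by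
              rw [Finset.sum_const, hcarde, ← WithBot.coe_nsmul, WithBot.coe_inj,
                nsmul_eq_mul, Nat.cast_sub hn]
              norm_num
          _ ≤ ∑ i ∈ Finset.univ.erase i₀, (((lamA : ℝ) : Rmax) ⊔ rs i) :=
              Finset.sum_le_sum fun i _ => le_sup_left
    rw [← h1, WithBot.coe_le_coe] at h2
    have hn1 : (1 : ℝ) ≤ (n : ℝ) := by exact_mod_cast hn
    nlinarith [h2, hgt]
end

section
/- Every max-plus polynomial f(t) = c_0 ⊕ c_1⊗t ⊕ ⋯ ⊕ c_n⊗t^{⊗n} with c_n ≠ ε factors, as a function on ℝ_max, into a product of linear factors: there exist r_1, r_2, …, r_n ∈ ℝ_max such that f(t) = c_n ⊗ (t ⊕ r_1) ⊗ (t ⊕ r_2) ⊗ ⋯ ⊗ (t ⊕ r_n) for all t ∈ ℝ_max. -/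
open BigOperators

section FactorizationProof
open Finset

lemma my_coe_nsmul (k : ℕ) (x : ℝ) : k • ((x : ℝ) : Rmax) = (((k : ℝ) * x : ℝ) : Rmax) := by
  induction k with
  | zero => simp
  | succ j ih =>
      rw [succ_nsmul, ih, ← WithBot.coe_add]
      congr 1
      push_cast
      ring

lemma my_nsmul_le (k : ℕ) {a b : Rmax} (h : a ≤ b) : k • a ≤ k • b :=
  nsmul_le_nsmul_right h k

lemma my_nsmul_sup (k : ℕ) (a b : Rmax) : k • (a ⊔ b) = k • a ⊔ k • b := by
  rcases le_total a b with h | h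
  · rw [sup_eq_right.2 h, sup_eq_right.2 (my_nsmul_le k h)]
  · rw [sup_eq_left.2 h, sup_eq_left.2 (my_nsmul_le k h)]

lemma my_add_sup_distrib (a b d : Rmax) : (a ⊔ b) + d = (a + d) ⊔ (b + d) := by
  rcases le_total a b with h | h
  · rw [sup_eq_right.2 h, sup_eq_right.2 (add_le_add h (le_refl d))]
  · rw [sup_eq_left.2 h, sup_eq_left.2 (add_le_add h (le_refl d))]

lemma my_sup_add (s : Finset ℕ) (f : ℕ → Rmax) (a : Rmax) :
    s.sup f + a = s.sup fun i => f i + a := by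
  apply le_antisymm
  · rcases s.eq_empty_or_nonempty with rfl | hne
    · simp
    · obtain ⟨i, hi, h⟩ := Finset.exists_mem_eq_sup s hne f
      rw [h]
      exact Finset.le_sup (f := fun i => f i + a) hi
  · exact Finset.sup_le fun i hi => add_le_add (Finset.le_sup hi) (le_refl a)

lemma maxPlus_aux : ∀ n : ℕ, ∀ c : ℕ → Rmax, c n ≠ ⊥ →
    ∃ rs : ℕ → Rmax, ∀ t : Rmax,
      ((Finset.range (n + 1)).sup fun i => c i + i • t)
        = c n + ∑ i ∈ Finset.range n, (t ⊔ rs i) := by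
  intro n
  induction n using Nat.strong_induction_on with
  | _ n IH =>
  intro c hc
  by_cases hS : ∀ i < n, c i = ⊥
  · -- degenerate: only leading coefficient
    refine ⟨fun _ => ⊥, fun t => ?_⟩
    have h1 : ((Finset.range n).sup fun i => c i + i • t) = ⊥ := by
      apply (Finset.sup_eq_bot_iff _ _).2
      intro i hi
      simp [hS i (Finset.mem_range.1 hi)]
    rw [Finset.range_add_one, Finset.sup_insert, h1, sup_bot_eq]
    have h2 : ∑ i ∈ Finset.range n, (t ⊔ (⊥ : Rmax)) = n • t := by
      simp
    simp only [sup_bot_eq] at h2 ⊢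
    rw [h2]
  · push_neg at hS
    obtain ⟨i₁, hi₁n, hi₁⟩ := hS
    set S : Finset ℕ := (Finset.range n).filter (fun i => c i ≠ ⊥) with hSdef
    have hSne : S.Nonempty := ⟨i₁, Finset.mem_filter.2 ⟨Finset.mem_range.2 hi₁n, hi₁⟩⟩
    set x : ℕ → ℝ := fun i => WithBot.unbotD 0 (c i) with hx
    have hcx : ∀ i, c i ≠ ⊥ → c i = ((x i : ℝ) : Rmax) := by
      intro i hi
      obtain ⟨y, hy⟩ := WithBot.ne_bot_iff_exists.1 hi
      have hxy : x i = y := by simp [hx, ← hy]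
      rw [hxy, hy]
    set ρf : ℕ → ℝ := fun i => (x i - x n) / ((n : ℝ) - i) with hρf
    obtain ⟨i₀, hi₀S, hi₀max⟩ := S.exists_max_image ρf hSne
    have hi₀n : i₀ < n := Finset.mem_range.1 (Finset.mem_filter.1 hi₀S).1
    have hci₀ : c i₀ ≠ ⊥ := (Finset.mem_filter.1 hi₀S).2
    set r : ℝ := ρf i₀ with hr
    set ρ : Rmax := ((r : ℝ) : Rmax) with hρ
    set m : ℕ := n - i₀ with hm
    have hmpos : 0 < m := by omega
    have hmr : ((m : ℕ) : ℝ) = (n : ℝ) - i₀ := by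
      rw [hm]; push_cast [Nat.cast_sub hi₀n.le]; ring
    have hi₀pos : (0:ℝ) < (n : ℝ) - i₀ := by
      have : (i₀:ℝ) < n := by exact_mod_cast hi₀n
      linarith
    -- equality at i₀ : c i₀ = c n + m • ρ
    have hEq : c i₀ = c n + m • ρ := by
      rw [hcx i₀ hci₀, hcx n hc, hρ, my_coe_nsmul, ← WithBot.coe_add, WithBot.coe_inj]
      rw [hmr, hr, hρf]
      dsimp only
      field_simp
      ring
    -- P1
    have hP1 : ∀ k, k ≤ n → c k ≤ c n + (n - k) • ρ := by
      intro k hk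
      by_cases hck : c k = ⊥
      · simp [hck]
      rcases eq_or_lt_of_le hk with rfl | hkn
      · simp
      have hkS : k ∈ S := Finset.mem_filter.2 ⟨Finset.mem_range.2 hkn, hck⟩
      have hle := hi₀max k hkS
      rw [hρf] at hle
      dsimp only at hle
      rw [hcx k hck, hcx n hc, hρ, my_coe_nsmul, ← WithBot.coe_add, WithBot.coe_le_coe]
      have hpos : (0:ℝ) < (n : ℝ) - k := by
        have : (k:ℝ) < n := by exact_mod_cast hkn
        linarith
      have hcast : (((n - k : ℕ) : ℝ)) = (n : ℝ) - k := by
        push_cast [Nat.cast_sub hk]; ring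
      rw [hcast]
      have h2 : x k - x n ≤ r * ((n:ℝ) - k) := (div_le_iff₀ hpos).1 hle
      linarith
    -- induction hypothesis on truncated polynomial
    obtain ⟨rs₀, hrs₀⟩ := IH i₀ hi₀n c hci₀
    refine ⟨fun i => if i < i₀ then rs₀ i else ρ, fun t => ?_⟩
    set F0 : Rmax := (Finset.range (i₀ + 1)).sup (fun i => c i + i • t) with hF0
    set F : Rmax := (Finset.range (n + 1)).sup (fun i => c i + i • t) with hF
    have hsum : ∑ i ∈ Finset.range n, (t ⊔ (if i < i₀ then rs₀ i else ρ)) =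
        (∑ i ∈ Finset.range i₀, (t ⊔ rs₀ i)) + m • (t ⊔ ρ) := by
      rw [Finset.range_eq_Ico, ← Finset.sum_Ico_consecutive _ (Nat.zero_le i₀) hi₀n.le]
      congr 1
      · rw [← Finset.range_eq_Ico]
        apply Finset.sum_congr rfl
        intro i hi
        rw [if_pos (Finset.mem_range.1 hi)]
      · rw [Finset.sum_congr rfl (fun i hi => by
          rw [if_neg (by have := (Finset.mem_Ico.1 hi).1; omega)]),
          Finset.sum_const, Nat.card_Ico]
    have hF0le : ∀ j, j ≤ i₀ → c j + j • t ≤ F0 := by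
      intro j hj
      rw [hF0]
      exact Finset.le_sup (f := fun i => c i + i • t) (s := Finset.range (i₀ + 1)) (b := j) (Finset.mem_range.2 (by omega))
    have hFle : ∀ j, j ≤ n → c j + j • t ≤ F := by
      intro j hj
      rw [hF]
      exact Finset.le_sup (f := fun i => c i + i • t) (s := Finset.range (n + 1)) (b := j) (Finset.mem_range.2 (by omega))
    have key1 : c i₀ + i₀ • t ≤ F0 := hF0le i₀ le_rfl
    -- main claim
    have claim : F + m • ρ = m • (t ⊔ ρ) + F0 := by
      rw [my_nsmul_sup, my_add_sup_distrib]
      apply le_antisymm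
      · rw [hF, my_sup_add]
        apply Finset.sup_le
        intro k hk
        have hkn : k ≤ n := by have := Finset.mem_range.1 hk; omega
        rcases le_or_gt k i₀ with hki | hki
        · refine le_trans ?_ le_sup_right
          calc c k + k • t + m • ρ = m • ρ + (c k + k • t) := by abel
            _ ≤ m • ρ + F0 := add_le_add_right (hF0le k hki) _
        · rcases le_total t ρ with htρ | htρ
          · refine le_trans ?_ le_sup_right
            have h1 : c k + k • t ≤ c i₀ + i₀ • t := by
              have e1 : k • t = i₀ • t + (k - i₀) • t := by
                rw [← add_nsmul]; congr 1; omega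
              have e2 : (n - k) • ρ + (k - i₀) • ρ = m • ρ := by
                rw [← add_nsmul]; congr 1; omega
              calc c k + k • t ≤ (c n + (n - k) • ρ) + k • t :=
                    add_le_add (hP1 k hkn) le_rfl
                _ = (c n + (n - k) • ρ) + (i₀ • t + (k - i₀) • t) := by rw [e1]
                _ ≤ (c n + (n - k) • ρ) + (i₀ • t + (k - i₀) • ρ) := by
                    exact add_le_add_right (add_le_add_right (my_nsmul_le _ htρ) _) _
                _ = (c n + ((n - k) • ρ + (k - i₀) • ρ)) + i₀ • t := by abel
                _ = (c n + m • ρ) + i₀ • t := by rw [e2]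
                _ = c i₀ + i₀ • t := by rw [← hEq]
            calc c k + k • t + m • ρ ≤ (c i₀ + i₀ • t) + m • ρ :=
                  add_le_add h1 le_rfl
              _ ≤ F0 + m • ρ := add_le_add key1 le_rfl
              _ = m • ρ + F0 := add_comm _ _
          · refine le_trans ?_ le_sup_left
            have e1 : (n - k) • t + k • t = i₀ • t + m • t := by
              rw [← add_nsmul, ← add_nsmul]; congr 1; omega
            calc c k + k • t + m • ρ
                ≤ (c n + (n - k) • ρ) + k • t + m • ρ :=
                  add_le_add (add_le_add (hP1 k hkn) le_rfl) le_rfl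
              _ ≤ (c n + (n - k) • t) + k • t + m • ρ := by
                  exact add_le_add (add_le_add
                    (add_le_add_right (my_nsmul_le _ htρ) _) le_rfl) le_rfl
              _ = (c n + m • ρ) + ((n - k) • t + k • t) := by abel
              _ = (c n + m • ρ) + (i₀ • t + m • t) := by rw [e1]
              _ = (c i₀ + i₀ • t) + m • t := by rw [← hEq]; abel
              _ ≤ F0 + m • t := add_le_add key1 le_rfl
              _ = m • t + F0 := add_comm _ _
      · apply sup_le
        · have h : F0 + m • t ≤ F + m • ρ := by
            rw [hF0, my_sup_add]
            apply Finset.sup_le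
            intro j hj
            have hj' : j ≤ i₀ := by have := Finset.mem_range.1 hj; omega
            rcases le_total t ρ with htρ | htρ
            · calc c j + j • t + m • t ≤ c j + j • t + m • ρ :=
                  add_le_add_right (my_nsmul_le _ htρ) _
                _ ≤ F + m • ρ := add_le_add (hFle j (by omega)) le_rfl
            · have e1 : (n - j) • ρ = m • ρ + (i₀ - j) • ρ := by
                rw [← add_nsmul]; congr 1; omega
              have e2 : (i₀ - j) • t + (j • t + m • t) = n • t := by
                rw [← add_nsmul, ← add_nsmul]; congr 1; omega
              calc c j + j • t + m • t
                  ≤ (c n + (n - j) • ρ) + j • t + m • t :=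
                    add_le_add (add_le_add (hP1 j (by omega)) le_rfl) le_rfl
                _ = (c n + (m • ρ + (i₀ - j) • ρ)) + j • t + m • t := by rw [e1]
                _ ≤ (c n + (m • ρ + (i₀ - j) • t)) + j • t + m • t := by
                    exact add_le_add (add_le_add (add_le_add_right
                      (add_le_add_right (my_nsmul_le _ htρ) _) _) le_rfl) le_rfl
                _ = (c n + ((i₀ - j) • t + (j • t + m • t))) + m • ρ := by abel
                _ = (c n + n • t) + m • ρ := by rw [e2]
                _ ≤ F + m • ρ := add_le_add (hFle n le_rfl) le_rfl
          calc m • t + F0 = F0 + m • t := add_comm _ _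
            _ ≤ F + m • ρ := h
        · have h : F0 ≤ F := Finset.sup_mono (Finset.range_subset_range.2 (by omega))
          calc m • ρ + F0 = F0 + m • ρ := add_comm _ _
            _ ≤ F + m • ρ := add_le_add h le_rfl
    -- conclude
    have hbot : (m • ρ) ≠ ⊥ := by
      rw [hρ, my_coe_nsmul]; exact WithBot.coe_ne_bot
    apply WithBot.add_right_cancel hbot
    rw [claim, hsum, hF0, hrs₀ t, hEq]
    abel

end FactorizationProof

open MaxPlus in
/-- Every max-plus polynomial
`f(t) = c_0 ⊕ c_1 ⊗ t ⊕ ⋯ ⊕ c_n ⊗ t^{⊗n}` with `c_n ≠ ε` factors, as a function on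
`ℝ_max`, into a product of linear factors:
`f(t) = c_n ⊗ (t ⊕ r_1) ⊗ ⋯ ⊗ (t ⊕ r_n)` for some `r_1, …, r_n ∈ ℝ_max`. -/
theorem maxPlus_polynomial_factorization (n : ℕ) (c : ℕ → Rmax) (hc : c n ≠ ⊥) :
    ∃ rs : Fin n → Rmax, ∀ t : Rmax,
      ((Finset.range (n + 1)).sup fun i => c i + i • t) = c n + ∑ i, (t ⊔ rs i) := by
  obtain ⟨rs, hrs⟩ := maxPlus_aux n c hc
  refine ⟨fun i => rs i, fun t => ?_⟩
  rw [hrs t]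
  congr 1
  exact (Fin.sum_univ_eq_sum_range (fun i => t ⊔ rs i) n).symm
end
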